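/- arXiv:2411.17199 — 5 statements merged into one kernel-verified Lean document; each statement's English description precedes it below -/
import Mathlib

section
/- For X > 0 and Y ∈ ℝ, Σ_{n∈ℤ} e^{−πn²X} e^{2πinY} = Π_{n=1}^∞ (1 − e^{−2πnX})(1 + e^{−2(2n−1)πX} + 2e^{−(2n−1)πX}cos(2πY)). -/
/-!
Expanding `∏_{j<N} (1 + q^{2j+1} w)(1 + q^{2j+1} w⁻¹)` by the `q`-binomial theorem in base `q²`
(after reflecting half of the factors) gives the finite triple product
`(q²;q²)_N ∏_{j<N} (1 + q^{2j+1} w)(1 + q^{2j+1} w⁻¹) = ∑_{|n| ≤ N} c_N(n) q^{n²} wⁿ` with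
`c_N(n) = (q²;q²)_N (q²;q²)_{2N} / ((q²;q²)_{N+n} (q²;q²)_{N-n})`. For `0 < q < 1` each `c_N(n)`
tends to `1` and all of them are bounded by `(q²;q²)_∞⁻²`, so Tannery's theorem lets `N → ∞`.
On the unit circle `w = e^{iθ}` the factors are real, and the real part of the series is the cosine
series; the theorem is the case `q = e^{-πX}`, `θ = 2πY`.
-/

open Filter Topology Finset

section Algebra

variable {R : Type*}

/-- `(t; t)_n`. -/
def qPochhammer [CommRing R] (t : R) (n : ℕ) : R := ∏ j ∈ range n, (1 - t ^ (j + 1))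

/-- `(t; t)_∞`. -/
noncomputable def qPochhammerInf [CommRing R] [TopologicalSpace R] (t : R) : R :=
  ∏' j, (1 - t ^ (j + 1))

/-- The Gaussian binomial coefficient `[m, k]_t`, defined by the `q`-Pascal rule so that it lives in
any semiring. -/
def qBinomial [CommSemiring R] (t : R) : ℕ → ℕ → R
  | _, 0 => 1
  | 0, _ + 1 => 0
  | m + 1, k + 1 => qBinomial t m k + t ^ (k + 1) * qBinomial t m (k + 1)

section CommSemiring

variable [CommSemiring R] (t : R)

@[simp] lemma qBinomial_zero_right (m : ℕ) : qBinomial t m 0 = 1 := by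
  cases m <;> rfl

lemma qBinomial_succ_succ (m k : ℕ) :
    qBinomial t (m + 1) (k + 1) = qBinomial t m k + t ^ (k + 1) * qBinomial t m (k + 1) := rfl

lemma qBinomial_eq_zero_of_lt : ∀ {m k : ℕ}, m < k → qBinomial t m k = 0
  | 0, _ + 1, _ => rfl
  | m + 1, k + 1, h => by
    rw [qBinomial_succ_succ, qBinomial_eq_zero_of_lt (by omega),
      qBinomial_eq_zero_of_lt (by omega), mul_zero, add_zero]

@[simp] lemma qBinomial_self : ∀ m : ℕ, qBinomial t m m = 1
  | 0 => rfl
  | m + 1 => by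
    rw [qBinomial_succ_succ, qBinomial_self m, qBinomial_eq_zero_of_lt t m.lt_succ_self, mul_zero,
      add_zero]

lemma map_qBinomial {S : Type*} [CommSemiring S] (f : R →+* S) :
    ∀ m k : ℕ, f (qBinomial t m k) = qBinomial (f t) m k
  | _, 0 => by simp
  | 0, _ + 1 => map_zero f
  | m + 1, k + 1 => by
    simp only [qBinomial_succ_succ, map_add, map_mul, map_pow, map_qBinomial f m]

theorem prod_one_add_pow_mul_eq_sum_qBinomial (m : ℕ) (x : R) :
    ∏ j ∈ range m, (1 + t ^ j * x) =
      ∑ k ∈ range (m + 1), qBinomial t m k * t ^ k.choose 2 * x ^ k := by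
  induction m generalizing x with
  | zero => simp
  | succ m ih =>
    have hshift : ∏ j ∈ range m, (1 + t ^ (j + 1) * x) = ∏ j ∈ range m, (1 + t ^ j * (t * x)) :=
      prod_congr rfl fun j _ => by ring
    set a : ℕ → R := fun k => qBinomial t m k * t ^ (k.choose 2 + k) * x ^ k
    have hlow : ∑ k ∈ range (m + 1), a k = ∑ k ∈ range (m + 1), a (k + 1) + 1 := by
      have htop : a (m + 1) = 0 := by simp [a, qBinomial_eq_zero_of_lt t m.lt_succ_self]
      rw [← add_zero (∑ k ∈ range (m + 1), a k), ← htop, ← sum_range_succ, sum_range_succ']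
      simp [a]
    have hchoose (k : ℕ) : (k + 1).choose 2 = k.choose 2 + k := by
      rw [Nat.choose_succ_succ, Nat.choose_one_right, add_comm]
    rw [prod_range_succ', hshift, ih, sum_range_succ' _ (m + 1), pow_zero, one_mul, mul_one_add,
      sum_mul]
    have hfirst : ∑ k ∈ range (m + 1), qBinomial t m k * t ^ k.choose 2 * (t * x) ^ k =
        ∑ k ∈ range (m + 1), a k := sum_congr rfl fun k _ => by ring
    rw [hfirst, hlow]
    simp only [qBinomial_succ_succ, hchoose, qBinomial_zero_right, Nat.choose_zero_succ, pow_zero,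
      mul_one, add_mul, sum_add_distrib, a]
    rw [add_right_comm, add_comm (∑ k ∈ range (m + 1), _)]
    congr 2 <;> exact sum_congr rfl fun k _ => by ring

end CommSemiring

section CommRing

variable [CommRing R] (t : R)

@[simp] lemma qPochhammer_zero : qPochhammer t 0 = 1 := prod_range_zero _

lemma qPochhammer_succ (n : ℕ) : qPochhammer t (n + 1) = qPochhammer t n * (1 - t ^ (n + 1)) :=
  prod_range_succ _ _

lemma qBinomial_add_mul_qPochhammer (a b : ℕ) :
    qBinomial t (a + b) a * qPochhammer t a * qPochhammer t b = qPochhammer t (a + b) := by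
  induction b generalizing a with
  | zero => simp
  | succ b ihb =>
    induction a with
    | zero => simp
    | succ a iha =>
      have h := ihb (a + 1)
      rw [show a + (b + 1) = a + 1 + b by ring] at iha
      rw [show a + 1 + (b + 1) = a + 1 + b + 1 by ring, qBinomial_succ_succ,
        qPochhammer_succ t (a + 1 + b)]
      rw [qPochhammer_succ t a, qPochhammer_succ t b] at *
      linear_combination (1 - t ^ (a + 1)) * iha + t ^ (a + 1) * (1 - t ^ (b + 1)) * h

end CommRing

section Field

variable {K : Type*} [Field K] {q w : K}

lemma sum_range_two_mul_add_one (N : ℕ) : ∑ j ∈ range N, (2 * j + 1) = N ^ 2 := by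
  induction N with
  | zero => simp
  | succ N ih => rw [sum_range_succ, ih]; ring

lemma prod_range_one_add_zpow_mul (hq : q ≠ 0) (hw : w ≠ 0) (N : ℕ) :
    ∏ i ∈ range N, (1 + q ^ (2 * (i : ℤ) + 1 - 2 * N) * w) =
      (q ^ N ^ 2)⁻¹ * w ^ N * ∏ j ∈ range N, (1 + q ^ (2 * j + 1) * w⁻¹) := by
  have hfactor : ∀ j ∈ range N, 1 + q ^ (2 * ((N - 1 - j : ℕ) : ℤ) + 1 - 2 * N) * w =
      (q ^ (2 * j + 1))⁻¹ * w * (1 + q ^ (2 * j + 1) * w⁻¹) := by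
    intro j hj
    have hexp : 2 * ((N - 1 - j : ℕ) : ℤ) + 1 - 2 * N = -((2 * j + 1 : ℕ) : ℤ) := by
      have := mem_range.mp hj
      omega
    rw [hexp, zpow_neg, zpow_natCast]
    field_simp
    ring
  rw [← prod_range_reflect, prod_congr rfl hfactor, prod_mul_distrib, prod_mul_distrib,
    prod_inv_distrib, prod_pow_eq_pow_sum, sum_range_two_mul_add_one, prod_const, card_range]

lemma two_mul_choose_two_add_self (k : ℕ) : 2 * k.choose 2 + k = k ^ 2 := by
  induction k with
  | zero => rfl
  | succ k ih => rw [Nat.choose_succ_succ, Nat.choose_one_right]; linear_combination ih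

theorem prod_one_add_mul_one_add_inv_eq_sum_qBinomial (hq : q ≠ 0) (hw : w ≠ 0) (N : ℕ) :
    ∏ j ∈ range N, ((1 + q ^ (2 * j + 1) * w) * (1 + q ^ (2 * j + 1) * w⁻¹)) =
      ∑ n ∈ Icc (-N : ℤ) N, qBinomial (q ^ 2) (2 * N) (n + N).toNat * q ^ (n ^ 2) * w ^ n := by
  have hsplit : ∏ i ∈ range (2 * N), (1 + (q ^ 2) ^ i * (q ^ (1 - 2 * (N : ℤ)) * w)) =
      (∏ i ∈ range N, (1 + q ^ (2 * (i : ℤ) + 1 - 2 * N) * w)) *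
        ∏ j ∈ range N, (1 + q ^ (2 * j + 1) * w) := by
    rw [two_mul, prod_range_add]
    congr 1 <;> refine prod_congr rfl fun i _ => ?_
    · rw [← mul_assoc, ← zpow_natCast, ← zpow_natCast, ← zpow_mul, ← zpow_add₀ hq]
      congr 3
      push_cast
      ring
    · rw [← mul_assoc, ← zpow_natCast, ← zpow_natCast, ← zpow_mul, ← zpow_add₀ hq, ← zpow_natCast]
      congr 3
      push_cast
      ring
  have hprod : ∏ j ∈ range N, ((1 + q ^ (2 * j + 1) * w) * (1 + q ^ (2 * j + 1) * w⁻¹)) =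
      q ^ N ^ 2 * (w ^ N)⁻¹ *
        ∏ i ∈ range (2 * N), (1 + (q ^ 2) ^ i * (q ^ (1 - 2 * (N : ℤ)) * w)) := by
    rw [hsplit, prod_range_one_add_zpow_mul hq hw, prod_mul_distrib]
    generalize ∏ j ∈ range N, (1 + q ^ (2 * j + 1) * w) = A
    generalize ∏ j ∈ range N, (1 + q ^ (2 * j + 1) * w⁻¹) = B
    field_simp
  rw [hprod, prod_one_add_pow_mul_eq_sum_qBinomial, mul_sum]
  refine sum_nbij' (fun k => (k : ℤ) - N) (fun n => (n + N).toNat) ?_ ?_ ?_ ?_ ?_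
  · intro k hk; simp at hk ⊢; omega
  · intro n hn; simp at hn ⊢; omega
  · intro k _; simp
  · intro n hn; simp at hn ⊢; omega
  · intro k _
    have hchoose : (2 * k.choose 2 + k : ℤ) = k ^ 2 := mod_cast two_mul_choose_two_add_self k
    have hqexp : q ^ N ^ 2 * ((q ^ 2) ^ k.choose 2 * (q ^ (1 - 2 * (N : ℤ))) ^ k) =
        q ^ (((k : ℤ) - N) ^ 2) := by
      rw [← pow_mul, ← zpow_natCast (q ^ (1 - 2 * (N : ℤ))) k, ← zpow_mul, ← zpow_natCast q (N ^ 2),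
        ← zpow_natCast q (2 * _), ← zpow_add₀ hq, ← zpow_add₀ hq]
      congr 1
      push_cast
      linear_combination hchoose
    have hwexp : (w ^ N)⁻¹ * w ^ k = w ^ ((k : ℤ) - N) := by
      rw [zpow_sub₀ hw, zpow_natCast, zpow_natCast, inv_mul_eq_div]
    rw [show ((k : ℤ) - N + N).toNat = k by omega, ← hqexp, ← hwexp]
    ring

end Field

end Algebra

section Real

variable {t : ℝ}

lemma qBinomial_nonneg (ht : 0 ≤ t) : ∀ m k : ℕ, 0 ≤ qBinomial t m k
  | _, 0 => by simp
  | 0, _ + 1 => le_rfl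
  | m + 1, k + 1 => by
    rw [qBinomial_succ_succ]
    have := qBinomial_nonneg ht m k
    have := qBinomial_nonneg ht m (k + 1)
    positivity

lemma antitone_qPochhammer (ht0 : 0 ≤ t) (ht1 : t ≤ 1) : Antitone (qPochhammer t) :=
  antitone_nat_of_succ_le fun n => by
    rw [qPochhammer_succ]
    refine mul_le_of_le_one_right ?_ (by linarith [pow_nonneg ht0 (n + 1)])
    exact prod_nonneg fun j _ => sub_nonneg.mpr (pow_le_one₀ ht0 ht1)

lemma qPochhammer_le_one (ht0 : 0 ≤ t) (ht1 : t ≤ 1) (n : ℕ) : qPochhammer t n ≤ 1 :=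
  qPochhammer_zero t ▸ antitone_qPochhammer ht0 ht1 n.zero_le

variable (ht0 : 0 ≤ t) (ht1 : t < 1)
include ht0 ht1

lemma summable_pow_comp {f : ℕ → ℕ} (hf : Function.Injective f) : Summable fun n => t ^ f n :=
  (summable_geometric_of_lt_one ht0 ht1).comp_injective hf

lemma summable_pow_mul_add {a : ℕ} (ha : a ≠ 0) (b : ℕ) : Summable fun n => t ^ (a * n + b) :=
  summable_pow_comp ht0 ht1 fun m n h => by simpa [ha] using h

lemma hasProd_qPochhammerInf : HasProd (fun j => 1 - t ^ (j + 1)) (qPochhammerInf t) := by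
  simp_rw [sub_eq_add_neg]
  exact (Real.multipliable_one_add_of_summable
    (summable_pow_comp ht0 ht1 (add_left_injective 1)).neg).hasProd

lemma tendsto_qPochhammer : Tendsto (qPochhammer t) atTop (𝓝 (qPochhammerInf t)) :=
  (hasProd_qPochhammerInf ht0 ht1).tendsto_prod_nat

lemma qPochhammerInf_le_qPochhammer (n : ℕ) : qPochhammerInf t ≤ qPochhammer t n :=
  (antitone_qPochhammer ht0 ht1.le).le_of_tendsto (tendsto_qPochhammer ht0 ht1) n

lemma qPochhammerInf_pos : 0 < qPochhammerInf t := by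
  have hfactor (j : ℕ) : 0 < 1 + -t ^ (j + 1) := by
    linarith [pow_lt_one₀ ht0 ht1 (by omega : j + 1 ≠ 0)]
  rw [qPochhammerInf]
  simp_rw [sub_eq_add_neg]
  rw [← Real.rexp_tsum_eq_tprod hfactor (Real.summable_log_one_add_of_summable
    (summable_pow_comp ht0 ht1 (add_left_injective 1)).neg)]
  exact Real.exp_pos _

lemma qPochhammer_pos (n : ℕ) : 0 < qPochhammer t n :=
  (qPochhammerInf_pos ht0 ht1).trans_le (qPochhammerInf_le_qPochhammer ht0 ht1 n)

lemma qBinomial_add_eq_div (a b : ℕ) :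
    qBinomial t (a + b) a = qPochhammer t (a + b) / (qPochhammer t a * qPochhammer t b) := by
  rw [← qBinomial_add_mul_qPochhammer, mul_assoc, mul_div_cancel_right₀]
  exact (mul_pos (qPochhammer_pos ht0 ht1 a) (qPochhammer_pos ht0 ht1 b)).ne'

lemma qBinomial_le_inv_qPochhammerInf_sq (m k : ℕ) :
    qBinomial t m k ≤ (qPochhammerInf t ^ 2)⁻¹ := by
  have hE := qPochhammerInf_pos ht0 ht1
  rcases le_or_gt k m with hkm | hmk
  · obtain ⟨b, rfl⟩ := Nat.exists_eq_add_of_le hkm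
    rw [qBinomial_add_eq_div ht0 ht1, sq, inv_eq_one_div]
    exact div_le_div₀ zero_le_one (qPochhammer_le_one ht0 ht1.le _) (by positivity)
      (mul_le_mul (qPochhammerInf_le_qPochhammer ht0 ht1 k)
        (qPochhammerInf_le_qPochhammer ht0 ht1 b) hE.le (qPochhammer_pos ht0 ht1 k).le)
  · rw [qBinomial_eq_zero_of_lt t hmk]
    positivity

lemma tendsto_qBinomial_add {a b : ℕ → ℕ} (ha : Tendsto a atTop atTop)
    (hb : Tendsto b atTop atTop) :
    Tendsto (fun N => qBinomial t (a N + b N) (a N)) atTop (𝓝 (qPochhammerInf t)⁻¹) := by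
  have hE := (qPochhammerInf_pos ht0 ht1).ne'
  have hP := tendsto_qPochhammer ht0 ht1
  simp_rw [qBinomial_add_eq_div ht0 ht1]
  have hlim := (hP.comp (ha.atTop_add_atTop hb)).div ((hP.comp ha).mul (hP.comp hb))
    (mul_ne_zero hE hE)
  rwa [div_mul_cancel_left₀ hE] at hlim

lemma tendsto_qPochhammer_mul_qBinomial (n : ℤ) :
    Tendsto (fun N : ℕ => qPochhammer t N * qBinomial t (2 * N) (n + N).toNat) atTop (𝓝 1) := by
  have hE := (qPochhammerInf_pos ht0 ht1).ne'
  have hindex (c : ℤ) : Tendsto (fun N : ℕ => (c + N).toNat) atTop atTop :=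
    tendsto_atTop_atTop.mpr fun b => ⟨b + c.natAbs, fun N hN => by omega⟩
  have hlim := (tendsto_qPochhammer ht0 ht1).mul
    (tendsto_qBinomial_add ht0 ht1 (hindex n) (hindex (-n)))
  rw [mul_inv_cancel₀ hE] at hlim
  refine hlim.congr' (eventually_atTop.mpr ⟨n.natAbs, fun N hN => ?_⟩)
  dsimp only
  congr 2
  omega

end Real

lemma summable_pow_sq_mul_pow {r s : ℝ} (hr0 : 0 ≤ r) (hr1 : r < 1) (hs : 0 ≤ s) :
    Summable fun n : ℕ => r ^ (n ^ 2) * s ^ n := by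
  have hlim : Tendsto (fun n : ℕ => r ^ n * s) atTop (𝓝 0) := by
    simpa using (tendsto_pow_atTop_nhds_zero_of_lt_one hr0 hr1).mul_const s
  have hsmall : ∀ᶠ n : ℕ in atTop, r ^ n * s < 1 / 2 := hlim.eventually_lt_const (by norm_num)
  refine (summable_geometric_two).of_norm_bounded_eventually_nat ?_
  filter_upwards [hsmall] with n hn
  rw [Real.norm_of_nonneg (by positivity), sq, pow_mul, ← mul_pow]
  exact pow_le_pow_left₀ (by positivity) hn.le n

lemma summable_zpow_sq_mul_zpow {r s : ℝ} (hr0 : 0 ≤ r) (hr1 : r < 1) (hs : 0 ≤ s) :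
    Summable fun n : ℤ => r ^ (n ^ 2) * s ^ n := by
  refine .of_nat_of_neg ?_ ?_
  · simpa [← zpow_natCast] using summable_pow_sq_mul_pow hr0 hr1 hs
  · simpa [← zpow_natCast, inv_pow] using summable_pow_sq_mul_pow hr0 hr1 (inv_nonneg.mpr hs)

section JacobiTripleProduct

variable {q : ℝ} {w : ℂ}

lemma prod_range_jacobiTripleProduct (hq : q ≠ 0) (hw : w ≠ 0) (N : ℕ) :
    ∏ j ∈ range N, (1 - (q : ℂ) ^ (2 * j + 2)) *
        ((1 + (q : ℂ) ^ (2 * j + 1) * w) * (1 + (q : ℂ) ^ (2 * j + 1) * w⁻¹)) =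
      ∑ n ∈ Icc (-N : ℤ) N,
        ((qPochhammer (q ^ 2) N * qBinomial (q ^ 2) (2 * N) (n + N).toNat : ℝ) : ℂ) *
          (q : ℂ) ^ (n ^ 2) * w ^ n := by
  rw [prod_mul_distrib,
    prod_one_add_mul_one_add_inv_eq_sum_qBinomial (Complex.ofReal_ne_zero.mpr hq) hw, mul_sum]
  refine sum_congr rfl fun n _ => ?_
  have hpoch :
      ∏ j ∈ range N, (1 - (q : ℂ) ^ (2 * j + 2)) = ((qPochhammer (q ^ 2) N : ℝ) : ℂ) := by
    push_cast [qPochhammer, ← pow_mul]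
    rfl
  rw [hpoch, Complex.ofReal_mul, ← Complex.ofRealHom_eq_coe (qBinomial _ _ _), map_qBinomial]
  simp only [Complex.ofRealHom_eq_coe, Complex.ofReal_pow]
  ring

variable (hq0 : 0 < q) (hq1 : q < 1)
include hq0 hq1

lemma multipliable_jacobiTripleProduct :
    Multipliable fun n : ℕ => (1 - (q : ℂ) ^ (2 * n + 2)) *
      ((1 + (q : ℂ) ^ (2 * n + 1) * w) * (1 + (q : ℂ) ^ (2 * n + 1) * w⁻¹)) := by
  have hsum (b : ℕ) : Summable fun n : ℕ => (q : ℂ) ^ (2 * n + b) := by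
    simpa using Complex.summable_ofReal.mpr (summable_pow_mul_add hq0.le hq1 two_ne_zero b)
  simp_rw [sub_eq_add_neg]
  exact (Complex.multipliable_one_add_of_summable (hsum 2).neg).mul
    ((Complex.multipliable_one_add_of_summable ((hsum 1).mul_right w)).mul
      (Complex.multipliable_one_add_of_summable ((hsum 1).mul_right w⁻¹)))

theorem hasProd_jacobiTripleProduct (hw : w ≠ 0) :
    HasProd (fun n : ℕ => (1 - (q : ℂ) ^ (2 * n + 2)) *
        ((1 + (q : ℂ) ^ (2 * n + 1) * w) * (1 + (q : ℂ) ^ (2 * n + 1) * w⁻¹)))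
      (∑' n : ℤ, (q : ℂ) ^ (n ^ 2) * w ^ n) := by
  have ht0 : 0 ≤ q ^ 2 := sq_nonneg q
  have ht1 : q ^ 2 < 1 := by nlinarith
  rw [(multipliable_jacobiTripleProduct hq0 hq1).hasProd_iff_tendsto_nat]
  refine Tendsto.congr (fun N => ((prod_range_jacobiTripleProduct hq0.ne' hw N).trans
    (sum_eq_tsum_indicator _ _)).symm) ?_
  refine tendsto_tsum_of_dominated_convergence
    (bound := fun n => (qPochhammerInf (q ^ 2) ^ 2)⁻¹ * ‖(q : ℂ) ^ (n ^ 2) * w ^ n‖) ?_ ?_ ?_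
  · refine ((summable_zpow_sq_mul_zpow hq0.le hq1 (norm_nonneg w)).mul_left
      (qPochhammerInf (q ^ 2) ^ 2)⁻¹).congr fun n => ?_
    rw [norm_mul, norm_zpow, norm_zpow, Complex.norm_real, Real.norm_of_nonneg hq0.le]
  · intro n
    have hcoeff := (Complex.continuous_ofReal.tendsto 1).comp
      (tendsto_qPochhammer_mul_qBinomial ht0 ht1 n)
    rw [Complex.ofReal_one] at hcoeff
    refine (one_mul ((q : ℂ) ^ (n ^ 2) * w ^ n) ▸ hcoeff.mul_const _).congr'
      (eventually_atTop.mpr ⟨n.natAbs, fun N hN => ?_⟩)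
    dsimp only [Function.comp_apply]
    rw [Set.indicator_of_mem (by simp; omega), mul_assoc]
  · refine Eventually.of_forall fun N n => ?_
    refine (norm_indicator_le_norm_self _ _).trans ?_
    rw [mul_assoc, norm_mul, Complex.norm_real, Real.norm_of_nonneg]
    · gcongr
      exact (mul_le_of_le_one_left (qBinomial_nonneg ht0 _ _)
        (qPochhammer_le_one ht0 ht1.le N)).trans (qBinomial_le_inv_qPochhammerInf_sq ht0 ht1 _ _)
    · exact mul_nonneg (qPochhammer_pos ht0 ht1 N).le (qBinomial_nonneg ht0 _ _)

lemma multipliable_jacobiTripleProduct_real (c : ℝ) :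
    Multipliable fun n : ℕ =>
      (1 - q ^ (2 * n + 2)) * (1 + q ^ (4 * n + 2) + 2 * q ^ (2 * n + 1) * c) := by
  have hsum {a : ℕ} (ha : a ≠ 0) (b : ℕ) := summable_pow_mul_add hq0.le hq1 ha b
  exact ((Real.multipliable_one_add_of_summable (hsum two_ne_zero 2).neg).mul
    (Real.multipliable_one_add_of_summable ((hsum four_ne_zero 2).add
      ((hsum two_ne_zero 1).mul_left (2 * c))))).congr fun n => by ring

theorem hasProd_jacobiTripleProduct_real (θ : ℝ) :
    HasProd (fun n : ℕ =>
        (1 - q ^ (2 * n + 2)) * (1 + q ^ (4 * n + 2) + 2 * q ^ (2 * n + 1) * Real.cos θ))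
      (∑' n : ℤ, q ^ (n ^ 2) * Real.cos (n * θ)) := by
  set w := Complex.exp (θ * Complex.I)
  have hfactor (n : ℕ) : (1 - (q : ℂ) ^ (2 * n + 2)) *
      ((1 + (q : ℂ) ^ (2 * n + 1) * w) * (1 + (q : ℂ) ^ (2 * n + 1) * w⁻¹)) =
      (((1 - q ^ (2 * n + 2)) * (1 + q ^ (4 * n + 2) + 2 * q ^ (2 * n + 1) * Real.cos θ) : ℝ) :
        ℂ) := by
    have hcos : w + w⁻¹ = 2 * Complex.cos θ := by
      rw [← Complex.exp_neg, Complex.two_cos, neg_mul]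
    push_cast
    linear_combination (q : ℂ) ^ (2 * n + 1) * (1 - (q : ℂ) ^ (2 * n + 2)) * hcos +
      (q : ℂ) ^ (4 * n + 2) * (1 - (q : ℂ) ^ (2 * n + 2)) * mul_inv_cancel₀ (Complex.exp_ne_zero _)
  have hterm (n : ℤ) : ((q : ℂ) ^ (n ^ 2) * w ^ n).re = q ^ (n ^ 2) * Real.cos (n * θ) := by
    rw [← Complex.ofReal_zpow, Complex.re_ofReal_mul, ← Complex.exp_int_mul, ← mul_assoc,
      ← Complex.ofReal_intCast, ← Complex.ofReal_mul, Complex.exp_ofReal_mul_I_re]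
  have hsummable : Summable fun n : ℤ => (q : ℂ) ^ (n ^ 2) * w ^ n := by
    refine .of_norm ((summable_zpow_sq_mul_zpow hq0.le hq1 (norm_nonneg w)).congr fun n => ?_)
    rw [norm_mul, norm_zpow, norm_zpow, Complex.norm_real, Real.norm_of_nonneg hq0.le]
  have hmult := multipliable_jacobiTripleProduct_real hq0 hq1 (Real.cos θ)
  have hprodC := hasProd_jacobiTripleProduct hq0 hq1 (Complex.exp_ne_zero (θ * Complex.I))
  rw [funext hfactor] at hprodC
  have hprod := (hmult.hasProd.map Complex.ofRealHom Complex.continuous_ofReal).unique hprodC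
  have hvalue : ∑' n : ℤ, q ^ (n ^ 2) * Real.cos (n * θ) =
      ∏' n : ℕ,
        (1 - q ^ (2 * n + 2)) * (1 + q ^ (4 * n + 2) + 2 * q ^ (2 * n + 1) * Real.cos θ) := by
    rw [← Complex.ofReal_re (∏' n : ℕ, _), ← Complex.ofRealHom_eq_coe, hprod,
      Complex.re_tsum hsummable]
    exact tsum_congr fun n => (hterm n).symm
  exact hvalue ▸ hmult.hasProd

end JacobiTripleProduct

open Real

theorem theta_triple_product (X Y : ℝ) (hX : 0 < X) :
    (∑' n : ℤ, Real.exp (-π * (n : ℝ)^2 * X) * Real.cos (2 * π * (n : ℝ) * Y))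
    = ∏' n : ℕ, (1 - Real.exp (-2 * π * ((n : ℝ) + 1) * X)) *
        (1 + Real.exp (-2 * (2 * ((n : ℝ) + 1) - 1) * π * X)
          + 2 * Real.exp (-(2 * ((n : ℝ) + 1) - 1) * π * X) * Real.cos (2 * π * Y)) := by
  have hq0 : 0 < rexp (-π * X) := exp_pos _
  have hq1 : rexp (-π * X) < 1 := exp_lt_one_iff.mpr (by nlinarith [pi_pos])
  calc ∑' n : ℤ, rexp (-π * n ^ 2 * X) * cos (2 * π * n * Y)
      = ∑' n : ℤ, rexp (-π * X) ^ (n ^ 2) * cos (n * (2 * π * Y)) := tsum_congr fun n => by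
        rw [← rpow_intCast, ← exp_mul]
        push_cast
        ring_nf
    _ = _ := (hasProd_jacobiTripleProduct_real hq0 hq1 (2 * π * Y)).tprod_eq.symm
    _ = _ := tprod_congr fun n => by
        simp only [← exp_nat_mul]
        push_cast
        ring_nf
end

section
/- Let μ(X) = Σ_{n≥2} n² e^{−π(n²−1)X}. Then for X ≥ 4/5, μ(X) ≤ 1/470. -/
open Real

private lemma exp_big : (1881 : ℝ) ≤ Real.exp (12 * π / 5) := by
  have hpi : (3.141592 : ℝ) ≤ π := le_of_lt Real.pi_gt_d6
  have h1 : Real.exp (7.5398208 : ℝ) ≤ Real.exp (12 * π / 5) := by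
    apply Real.exp_le_exp.mpr; nlinarith
  have h2 : Real.exp (7.5398208 : ℝ) = (Real.exp 1) ^ 7 * Real.exp (0.5398208 : ℝ) := by
    rw [← Real.exp_nat_mul, ← Real.exp_add]; norm_num
  have he : (2.7182818283 : ℝ) ≤ Real.exp 1 := le_of_lt Real.exp_one_gt_d9
  have ht : ∑ i ∈ Finset.range 8, (0.5398208 : ℝ) ^ i / (Nat.factorial i) ≤ Real.exp (0.5398208 : ℝ) :=
    Real.sum_le_exp_of_nonneg (by norm_num) 8
  have hsum : (1.7156 : ℝ) ≤ ∑ i ∈ Finset.range 8, (0.5398208 : ℝ) ^ i / (Nat.factorial i) := by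
    simp [Finset.sum_range_succ, Nat.factorial]
    norm_num
  have hexp2 : (1.7156 : ℝ) ≤ Real.exp (0.5398208 : ℝ) := le_trans hsum ht
  have hpow : (1096.6 : ℝ) ≤ (Real.exp 1) ^ 7 := by
    calc (1096.6 : ℝ) ≤ (2.7182818283 : ℝ) ^ 7 := by norm_num
    _ ≤ (Real.exp 1) ^ 7 := by gcongr
  calc (1881 : ℝ) ≤ 1096.6 * 1.7156 := by norm_num
  _ ≤ (Real.exp 1) ^ 7 * Real.exp (0.5398208 : ℝ) := by
      apply mul_le_mul hpow hexp2 (by norm_num) (by positivity)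
  _ = Real.exp (7.5398208 : ℝ) := h2.symm
  _ ≤ _ := h1

private lemma exp_small : Real.exp (-(4 * π)) ≤ 1/150000 := by
  have hpi : (3 : ℝ) ≤ π := le_of_lt Real.pi_gt_three
  have h1 : Real.exp (-(4 * π)) ≤ Real.exp (-12 : ℝ) := by
    apply Real.exp_le_exp.mpr; linarith
  have h2 : Real.exp (-12 : ℝ) = ((Real.exp 1) ^ 12)⁻¹ := by
    rw [← Real.exp_nat_mul, ← Real.exp_neg]; norm_num
  have he : (2.71828 : ℝ) ≤ Real.exp 1 := by
    have := Real.exp_one_gt_d9; linarith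
  have : (150000 : ℝ) ≤ (Real.exp 1) ^ 12 := by
    calc (150000 : ℝ) ≤ (2.71828 : ℝ) ^ 12 := by norm_num
    _ ≤ (Real.exp 1) ^ 12 := by gcongr
  calc Real.exp (-(4 * π)) ≤ ((Real.exp 1) ^ 12)⁻¹ := h1.trans_eq h2
  _ ≤ 1/150000 := by
      rw [one_div]
      exact inv_anti₀ (by norm_num) this

private lemma pow_bound (n : ℕ) : ((n:ℝ)+2)^2 ≤ 4 * 3 ^ n := by
  induction n with
  | zero => norm_num
  | succ m ih =>
    have hm0 : (0:ℝ) ≤ (m:ℝ) := Nat.cast_nonneg m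
    push_cast [pow_succ] at ih ⊢
    nlinarith

theorem mu_bound (X : ℝ) (hX : 4/5 ≤ X) :
    (∑' n : ℕ, ((n : ℝ) + 2)^2 * Real.exp (-π * (((n : ℝ) + 2)^2 - 1) * X)) ≤ 1/470 := by
  set c : ℝ := 4 * Real.exp (-(12 * π / 5)) with hc
  set r : ℝ := 3 * Real.exp (-(4 * π)) with hr
  have hrpos : (0:ℝ) ≤ r := by positivity
  have hrle : r ≤ 1/50000 := by
    have := exp_small; rw [hr]; nlinarith
  have hr1 : r < 1 := by linarith
  have hbound : ∀ n : ℕ, ((n : ℝ) + 2)^2 * Real.exp (-π * (((n : ℝ) + 2)^2 - 1) * X)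
      ≤ c * r ^ n := by
    intro n
    have hpi := Real.pi_pos
    have hn0 : (0:ℝ) ≤ (n:ℝ) := Nat.cast_nonneg n
    have hA : (0:ℝ) ≤ ((n:ℝ)+2)^2 - 1 := by nlinarith
    have hnn : ((n:ℝ)) ≤ ((n:ℝ))^2 := by
      exact_mod_cast Nat.le_self_pow two_ne_zero n
    have hn : (5:ℝ) * n + 3 ≤ ((n:ℝ)+2)^2 - 1 := by nlinarith
    have h1 : Real.exp (-π * (((n : ℝ) + 2)^2 - 1) * X)
        ≤ Real.exp (-(12 * π / 5) + (n:ℝ) * (-(4*π))) := by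
      apply Real.exp_le_exp.mpr
      have k1 : π * (((n:ℝ)+2)^2 - 1) * (4/5) ≤ π * (((n:ℝ)+2)^2 - 1) * X :=
        mul_le_mul_of_nonneg_left hX (mul_nonneg hpi.le hA)
      have k2 : π * ((5:ℝ) * n + 3) ≤ π * (((n:ℝ)+2)^2 - 1) :=
        mul_le_mul_of_nonneg_left hn hpi.le
      nlinarith
    have h1' : Real.exp (-π * (((n : ℝ) + 2)^2 - 1) * X)
        ≤ Real.exp (-(12 * π / 5)) * Real.exp (-(4*π)) ^ n := by
      rw [← Real.exp_nat_mul, ← Real.exp_add]; exact h1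
    have h2 : ((n:ℝ)+2)^2 ≤ 4 * 3 ^ n := pow_bound n
    calc ((n : ℝ) + 2)^2 * Real.exp (-π * (((n : ℝ) + 2)^2 - 1) * X)
        ≤ (4 * 3 ^ n) * (Real.exp (-(12 * π / 5)) * Real.exp (-(4*π)) ^ n) :=
          mul_le_mul h2 h1' (Real.exp_pos _).le (by positivity)
      _ = c * r ^ n := by rw [hc, hr, mul_pow]; ring
  have hgeo : Summable (fun n : ℕ => c * r ^ n) :=
    (summable_geometric_of_lt_one hrpos hr1).mul_left c
  have hsumm : Summable (fun n : ℕ =>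
      ((n : ℝ) + 2)^2 * Real.exp (-π * (((n : ℝ) + 2)^2 - 1) * X)) := by
    apply Summable.of_nonneg_of_le (fun n => by positivity) hbound hgeo
  calc (∑' n : ℕ, ((n : ℝ) + 2)^2 * Real.exp (-π * (((n : ℝ) + 2)^2 - 1) * X))
      ≤ ∑' n : ℕ, c * r ^ n := Summable.tsum_le_tsum hbound hsumm hgeo
    _ = c * (1 - r)⁻¹ := by rw [tsum_mul_left, tsum_geometric_of_lt_one hrpos hr1]
    _ ≤ (4/1881) * (50000/49999 : ℝ) := by
        have hcle : c ≤ 4/1881 := by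
          have h : Real.exp (-(12 * π / 5)) ≤ 1/1881 := by
            rw [Real.exp_neg, one_div]
            exact inv_anti₀ (by norm_num) exp_big
          rw [hc]; linarith
        have hinv : (1 - r)⁻¹ ≤ (50000/49999 : ℝ) := by
          have : (49999/50000 : ℝ) ≤ 1 - r := by linarith
          calc (1-r)⁻¹ ≤ ((49999/50000 : ℝ))⁻¹ := inv_anti₀ (by norm_num) this
            _ = (50000/49999 : ℝ) := by norm_num
        apply mul_le_mul hcle hinv (by rw [inv_nonneg]; linarith) (by norm_num)
    _ ≤ 1/470 := by norm_num
end

section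
/- For all X ∈ (0, 1/2] and Y ∈ ℝ with Σ_{n∈ℤ}(n−Y)e^{−π(n−Y)²/X} ≠ 0, we have |Σ_{n∈ℤ}(n−Y)³ e^{−π(n−Y)²/X}| ≤ (1/4)·|Σ_{n∈ℤ}(n−Y) e^{−π(n−Y)²/X}|. -/
open Real

/-!
Put `a = π / X ≥ 2π` and `g_c(u) = (u³ + c u) e^{-a u²}`. All sums involved are odd, 1-periodic
lattice sums `Y ↦ ∑ₙ g(n - Y)`, so it suffices to take `0 ≤ Y ≤ 1/2`. The cubic sum is half of
`∑ g_{-1/4} + ∑ g_{1/4}` and the linear sum twice `∑ g_{1/4} - ∑ g_{-1/4}`, so the bound follows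
from `∑ₙ g_{-1/4}(n - Y) ≥ 0 ≥ ∑ₙ g_{1/4}(n - Y)`.

An odd lattice sum can be paired as `-g(Y) + ∑_{m ≥ 1} (g(m - Y) - g(m + Y))` or as
`∑_{m ≥ 0} (g(m + 1 - Y) - g(m + Y))`. Past `3/4` both `g_c` and `u g_c(u)` decrease, so every pair
except the first has the right sign, and the first one is settled by a polynomial lower bound
for the exponential. Where that fails (`Y > 1/4` for `c = -1/4`, `Y < 1/16` for `c = 1/4`) the
other pairing is used: by the mean value theorem a pair of width `δ` starting at `s` is at most
`2aδ · s g_c(s)`, and the Gaussian decay makes the sum of these small against `|g_c(Y)|`.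
-/

open Set

section LatticeSum

variable {g : ℝ → ℝ}

theorem tsum_int_sub_sub_intCast (g : ℝ → ℝ) (Y : ℝ) (k : ℤ) :
    ∑' n : ℤ, g (n - (Y - k)) = ∑' n : ℤ, g (n - Y) := by
  rw [← (Equiv.subRight k).tsum_eq]
  refine tsum_congr fun n => ?_
  simp only [Equiv.subRight_apply, Int.cast_sub, sub_sub_sub_cancel_right]

theorem tsum_int_sub_one_sub (hg : ∀ u, g (-u) = -g u) (Y : ℝ) :
    ∑' n : ℤ, g (n - (1 - Y)) = -∑' n : ℤ, g (n - Y) := by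
  rw [← tsum_neg, ← ((Equiv.neg ℤ).trans (Equiv.addRight 1)).tsum_eq]
  refine tsum_congr fun n => ?_
  rw [← hg]
  simp only [Equiv.trans_apply, Equiv.neg_apply, Equiv.coe_addRight, Int.cast_add, Int.cast_neg,
    Int.cast_one]
  ring_nf

theorem intCast_natCast_add_one_sub (m : ℕ) (Y : ℝ) :
    (((m : ℤ) + 1 : ℤ) : ℝ) - Y = m + (1 - Y) := by
  push_cast; ring

theorem intCast_neg_natCast_add_one_sub (m : ℕ) (Y : ℝ) :
    ((-((m : ℤ) + 1) : ℤ) : ℝ) - Y = -(m + (1 + Y)) := by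
  push_cast; ring

theorem summable_int_sub (hg : ∀ u, g (-u) = -g u)
    (hs : ∀ d, 0 ≤ d → Summable fun m : ℕ => g (m + d)) {Y : ℝ} (hY₀ : 0 ≤ Y) (hY₁ : Y ≤ 1) :
    Summable fun n : ℤ => g (n - Y) := by
  refine .of_add_one_of_neg_add_one ?_ ?_
  · simpa only [intCast_natCast_add_one_sub] using hs (1 - Y) (by linarith)
  · simpa only [intCast_neg_natCast_add_one_sub, hg] using (hs (1 + Y) (by linarith)).neg

theorem tsum_int_sub_eq_neg_add_tsum (hg : ∀ u, g (-u) = -g u)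
    (hs : ∀ d, 0 ≤ d → Summable fun m : ℕ => g (m + d)) {Y : ℝ} (hY₀ : 0 ≤ Y) (hY₁ : Y ≤ 1) :
    ∑' n : ℤ, g (n - Y) = -g Y + ∑' m : ℕ, (g (m + (1 - Y)) - g (m + (1 + Y))) := by
  have h₁ := hs (1 - Y) (by linarith)
  have h₂ := hs (1 + Y) (by linarith)
  rw [tsum_of_add_one_of_neg_add_one (by simpa only [intCast_natCast_add_one_sub] using h₁)
    (by simpa only [intCast_neg_natCast_add_one_sub, hg] using h₂.neg), h₁.tsum_sub h₂]
  simp only [intCast_natCast_add_one_sub, intCast_neg_natCast_add_one_sub, tsum_neg, Int.cast_zero,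
    zero_sub, hg]
  ring

theorem tsum_int_sub_eq_tsum_sub (hg : ∀ u, g (-u) = -g u)
    (hs : ∀ d, 0 ≤ d → Summable fun m : ℕ => g (m + d)) {Y : ℝ} (hY₀ : 0 ≤ Y) (hY₁ : Y ≤ 1) :
    ∑' n : ℤ, g (n - Y) = ∑' m : ℕ, (g (m + (1 - Y)) - g (m + Y)) := by
  have h₀ := hs Y hY₀
  rw [tsum_int_sub_eq_neg_add_tsum hg hs hY₀ hY₁, (hs (1 - Y) (by linarith)).tsum_sub h₀,
    (hs (1 - Y) (by linarith)).tsum_sub (hs (1 + Y) (by linarith)), h₀.tsum_eq_zero_add]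
  push_cast
  simp only [zero_add, add_assoc]
  ring

end LatticeSum

section ExpBounds

variable {a d : ℝ}

theorem mul_exp_le_mul_exp {p q s t : ℝ} (h : p ≤ q * exp (t - s)) : p * exp s ≤ q * exp t :=
  calc p * exp s ≤ q * exp (t - s) * exp s := by gcongr
    _ = q * exp t := by rw [mul_assoc, ← exp_add, sub_add_cancel]

theorem mul_exp_neg_mul_le {a₀ β : ℝ} (ha₀ : 0 < a₀) (hβ : 1 ≤ β * a₀) (ha : a₀ ≤ a) :
    a * exp (-(β * a)) ≤ a₀ * exp (-(β * a₀)) := by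
  have hβpos : 0 < β := by nlinarith
  have h₁ : a ≤ a₀ * exp (β * (a - a₀)) := by
    nlinarith [add_one_le_exp (β * (a - a₀))]
  calc a * exp (-(β * a)) ≤ a₀ * exp (β * (a - a₀)) * exp (-(β * a)) := by gcongr
    _ = a₀ * exp (-(β * a₀)) := by rw [mul_assoc, ← exp_add]; ring_nf

theorem exp_neg_le_inv_of_le_sum {x c : ℝ} (hc : 0 < c) (hx : 0 ≤ x) (n : ℕ)
    (h : c ≤ ∑ i ∈ Finset.range n, x ^ i / i.factorial) : exp (-x) ≤ c⁻¹ := by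
  rw [exp_neg]
  exact inv_anti₀ hc (h.trans (sum_le_exp_of_nonneg hx n))

theorem nat_add_pow_four_mul_exp_le (ha : 6 ≤ a) (hd : 1 / 2 ≤ d) (m : ℕ) :
    (m + d) ^ 4 * exp (-(a * (m + d) ^ 2)) ≤ d ^ 4 * exp (-(a * d ^ 2)) * exp (-4) ^ m := by
  have hm : (0 : ℝ) ≤ m := m.cast_nonneg
  have hpoly : (m + d) ^ 4 ≤ d ^ 4 * exp (8 * m) := by
    have h₁ : m + d ≤ d * exp (2 * m) :=
      calc (m : ℝ) + d ≤ d * (2 * m + 1) := by nlinarith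
        _ ≤ d * exp (2 * m) :=
          mul_le_mul_of_nonneg_left (by linarith [add_one_le_exp (2 * (m : ℝ))]) (by linarith)
    calc (m + d) ^ 4 ≤ (d * exp (2 * m)) ^ 4 := by gcongr
      _ = d ^ 4 * exp (8 * m) := by rw [mul_pow, ← exp_nat_mul]; ring_nf
  have hgauss : exp (-(a * (m + d) ^ 2)) ≤ exp (-(a * d ^ 2)) * exp (-(12 * m)) := by
    rw [← exp_add, exp_le_exp]
    have : (m : ℝ) ≤ m ^ 2 := by exact_mod_cast Nat.le_self_pow two_ne_zero m
    nlinarith [mul_nonneg (sub_nonneg.2 ha) (by positivity : (0 : ℝ) ≤ 2 * d * m + m ^ 2),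
      mul_nonneg hm (sub_nonneg.2 hd)]
  calc (m + d) ^ 4 * exp (-(a * (m + d) ^ 2))
      ≤ d ^ 4 * exp (8 * m) * (exp (-(a * d ^ 2)) * exp (-(12 * m))) := by gcongr
    _ = d ^ 4 * exp (-(a * d ^ 2)) * exp (-4) ^ m := by
      rw [← exp_nat_mul, mul_mul_mul_comm, ← exp_add]; ring_nf

theorem summable_nat_add_pow_four_mul_exp (ha : 6 ≤ a) (hd : 1 / 2 ≤ d) :
    Summable fun m : ℕ => (m + d) ^ 4 * exp (-(a * (m + d) ^ 2)) :=
  .of_nonneg_of_le (fun m => by positivity) (nat_add_pow_four_mul_exp_le ha hd)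
    ((summable_geometric_of_lt_one (exp_pos _).le (exp_lt_one_iff.2 (by norm_num))).mul_left _)

theorem tsum_nat_add_pow_four_mul_exp_le (ha : 6 ≤ a) (hd : 1 / 2 ≤ d) :
    ∑' m : ℕ, (m + d) ^ 4 * exp (-(a * (m + d) ^ 2)) ≤ 2 * (d ^ 4 * exp (-(a * d ^ 2))) := by
  have hr : exp (-4 : ℝ) < 1 := exp_lt_one_iff.2 (by norm_num)
  have hr' : exp (-4 : ℝ) ≤ 1 / 2 := by
    rw [exp_neg, inv_le_comm₀ (exp_pos _) (by norm_num)]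
    linarith [add_one_le_exp (4 : ℝ)]
  calc ∑' m : ℕ, (m + d) ^ 4 * exp (-(a * (m + d) ^ 2))
      ≤ ∑' m : ℕ, d ^ 4 * exp (-(a * d ^ 2)) * exp (-4) ^ m :=
        (summable_nat_add_pow_four_mul_exp ha hd).tsum_le_tsum (nat_add_pow_four_mul_exp_le ha hd)
          ((summable_geometric_of_lt_one (exp_pos _).le hr).mul_left _)
    _ = d ^ 4 * exp (-(a * d ^ 2)) * (1 - exp (-4))⁻¹ := by
        rw [tsum_mul_left, tsum_geometric_of_lt_one (exp_pos _).le hr]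
    _ ≤ d ^ 4 * exp (-(a * d ^ 2)) * 2 := by
        gcongr
        rw [inv_le_comm₀ (by linarith) (by norm_num)]
        linarith
    _ = 2 * (d ^ 4 * exp (-(a * d ^ 2))) := by ring

end ExpBounds

noncomputable def cubicGaussian (a c u : ℝ) : ℝ := (u ^ 3 + c * u) * exp (-(a * u ^ 2))

section CubicGaussian

variable {a c d : ℝ}

theorem cubicGaussian_neg (a c u : ℝ) : cubicGaussian a c (-u) = -cubicGaussian a c u := by
  simp only [cubicGaussian, neg_sq]; ring

theorem hasDerivAt_exp_neg_mul_sq (a u : ℝ) :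
    HasDerivAt (fun v => exp (-(a * v ^ 2))) (-(2 * a * u) * exp (-(a * u ^ 2))) u := by
  simpa [mul_comm, mul_left_comm, mul_assoc] using (((hasDerivAt_pow 2 u).const_mul a).neg).exp

theorem hasDerivAt_cubicGaussian (a c u : ℝ) :
    HasDerivAt (cubicGaussian a c)
      ((3 * u ^ 2 + c) * exp (-(a * u ^ 2)) - 2 * a * (u * cubicGaussian a c u)) u :=
  (((hasDerivAt_pow 3 u).fun_add ((hasDerivAt_id' u).const_mul c)).fun_mul
    (hasDerivAt_exp_neg_mul_sq a u)).congr_deriv (by simp only [cubicGaussian]; push_cast; ring)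

theorem hasDerivAt_mul_cubicGaussian (a c u : ℝ) :
    HasDerivAt (fun v => v * cubicGaussian a c v)
      ((4 * u ^ 3 + 2 * c * u) * exp (-(a * u ^ 2)) - 2 * a * u ^ 2 * cubicGaussian a c u) u :=
  ((hasDerivAt_id' u).fun_mul (hasDerivAt_cubicGaussian a c u)).congr_deriv
    (by simp only [cubicGaussian]; ring)

theorem four_mul_sq_add_le (ha : 6 ≤ a) (hc : |c| ≤ 1 / 4) {u : ℝ} (hu : 3 / 4 ≤ u) :
    4 * u ^ 2 + 2 * c ≤ 2 * a * u ^ 2 * (u ^ 2 + c) := by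
  obtain ⟨hc₁, hc₂⟩ := abs_le.1 hc
  have hu2 : 9 / 16 ≤ u ^ 2 := by nlinarith
  nlinarith [mul_nonneg (sub_nonneg.2 ha) (mul_nonneg (sq_nonneg u) (by linarith : 0 ≤ u ^ 2 + c)),
    mul_nonneg (sub_nonneg.2 hu2) (by linarith : 0 ≤ c + 1 / 4)]

theorem antitoneOn_cubicGaussian (ha : 6 ≤ a) (hc : |c| ≤ 1 / 4) :
    AntitoneOn (cubicGaussian a c) (Ici (3 / 4)) := by
  refine antitoneOn_of_hasDerivWithinAt_nonpos (convex_Ici _)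
    (fun u _ => (hasDerivAt_cubicGaussian a c u).continuousAt.continuousWithinAt)
    (fun u _ => (hasDerivAt_cubicGaussian a c u).hasDerivWithinAt) fun u hu => ?_
  rw [interior_Ici, mem_Ioi] at hu
  have key := four_mul_sq_add_le ha hc hu.le
  obtain ⟨hc₁, -⟩ := abs_le.1 hc
  have : 3 * u ^ 2 + c ≤ 2 * a * (u * (u ^ 3 + c * u)) := by nlinarith
  simp only [cubicGaussian]
  nlinarith [exp_pos (-(a * u ^ 2))]

theorem antitoneOn_mul_cubicGaussian (ha : 6 ≤ a) (hc : |c| ≤ 1 / 4) :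
    AntitoneOn (fun u => u * cubicGaussian a c u) (Ici (3 / 4)) := by
  refine antitoneOn_of_hasDerivWithinAt_nonpos (convex_Ici _)
    (fun u _ => (hasDerivAt_mul_cubicGaussian a c u).continuousAt.continuousWithinAt)
    (fun u _ => (hasDerivAt_mul_cubicGaussian a c u).hasDerivWithinAt) fun u hu => ?_
  rw [interior_Ici, mem_Ioi] at hu
  have key := mul_le_mul_of_nonneg_left (four_mul_sq_add_le ha hc hu.le) (by linarith : 0 ≤ u)
  have : 4 * u ^ 3 + 2 * c * u ≤ 2 * a * u ^ 2 * (u ^ 3 + c * u) := by nlinarith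
  simp only [cubicGaussian]
  nlinarith [exp_pos (-(a * u ^ 2))]

theorem cubicGaussian_sub_le (ha : 6 ≤ a) (hc : |c| ≤ 1 / 4) {s t : ℝ} (hs : 3 / 4 ≤ s)
    (hst : s ≤ t) :
    cubicGaussian a c s - cubicGaussian a c t ≤ 2 * a * (t - s) * (s * cubicGaussian a c s) := by
  have hderiv : ∀ x ∈ interior (Ici s), -(2 * a * (s * cubicGaussian a c s))
      ≤ deriv (cubicGaussian a c) x := by
    intro x hx
    rw [interior_Ici, mem_Ioi] at hx
    rw [(hasDerivAt_cubicGaussian a c x).deriv]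
    have hmono := antitoneOn_mul_cubicGaussian ha hc hs (hs.trans hx.le) hx.le
    obtain ⟨hc₁, -⟩ := abs_le.1 hc
    have : 0 ≤ (3 * x ^ 2 + c) * exp (-(a * x ^ 2)) := mul_nonneg (by nlinarith) (exp_pos _).le
    nlinarith
  have := (convex_Ici s).mul_sub_le_image_sub_of_le_deriv
    (fun u _ => (hasDerivAt_cubicGaussian a c u).continuousAt.continuousWithinAt)
    (fun u _ => (hasDerivAt_cubicGaussian a c u).differentiableAt.differentiableWithinAt)
    hderiv s (mem_Ici.2 le_rfl) t (mem_Ici.2 hst) hst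
  linarith

theorem abs_cubicGaussian_le (a : ℝ) (hc : |c| ≤ 1 / 4) {u : ℝ} (hu : 1 / 2 ≤ u) :
    |cubicGaussian a c u| ≤ 4 * (u ^ 4 * exp (-(a * u ^ 2))) := by
  obtain ⟨hc₁, hc₂⟩ := abs_le.1 hc
  rw [cubicGaussian, abs_mul, abs_exp, ← mul_assoc]
  gcongr
  rw [abs_le]
  constructor <;>
    nlinarith [pow_le_pow_left₀ (by norm_num) hu 3, pow_le_pow_left₀ (by norm_num) hu 4]

theorem mul_cubicGaussian_nonneg (a : ℝ) (hc : |c| ≤ 1 / 4) {u : ℝ} (hu : 1 / 2 ≤ u) :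
    0 ≤ u * cubicGaussian a c u := by
  obtain ⟨hc₁, -⟩ := abs_le.1 hc
  have hu2 : 1 / 4 ≤ u ^ 2 := by nlinarith
  rw [cubicGaussian, ← mul_assoc]
  exact mul_nonneg (by nlinarith [mul_nonneg (sq_nonneg u) (by linarith : 0 ≤ u ^ 2 + c)])
    (exp_pos _).le

theorem mul_cubicGaussian_le (a : ℝ) (hc : |c| ≤ 1 / 4) {u : ℝ} (hu : 1 / 2 ≤ u) :
    u * cubicGaussian a c u ≤ 2 * (u ^ 4 * exp (-(a * u ^ 2))) := by
  obtain ⟨-, hc₂⟩ := abs_le.1 hc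
  have hu2 : 1 / 4 ≤ u ^ 2 := by nlinarith
  rw [cubicGaussian, ← mul_assoc, ← mul_assoc]
  exact mul_le_mul_of_nonneg_right (by nlinarith [mul_nonneg (sq_nonneg u) (sub_nonneg.2 hu2)])
    (exp_pos _).le

theorem summable_cubicGaussian_nat_add (ha : 6 ≤ a) (hc : |c| ≤ 1 / 4) (hd : 0 ≤ d) :
    Summable fun m : ℕ => cubicGaussian a c (m + d) := by
  rw [← summable_nat_add_iff 1]
  refine ((summable_nat_add_pow_four_mul_exp ha (d := 1 + d) (by linarith)).mul_left 4
    ).of_norm_bounded fun m => ?_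
  rw [Real.norm_eq_abs, Nat.cast_add_one, add_assoc, add_comm 1 d]
  exact abs_cubicGaussian_le a hc (by linarith [m.cast_nonneg (α := ℝ)])

theorem summable_mul_cubicGaussian_nat_add (ha : 6 ≤ a) (hc : |c| ≤ 1 / 4) (hd : 1 / 2 ≤ d) :
    Summable fun m : ℕ => (m + d) * cubicGaussian a c (m + d) :=
  ((summable_nat_add_pow_four_mul_exp ha hd).mul_left 2).of_nonneg_of_le
    (fun m => mul_cubicGaussian_nonneg a hc (by linarith [m.cast_nonneg (α := ℝ)]))
    (fun m => mul_cubicGaussian_le a hc (by linarith [m.cast_nonneg (α := ℝ)]))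

theorem tsum_mul_cubicGaussian_le (ha : 6 ≤ a) (hc : |c| ≤ 1 / 4) (hd : 1 / 2 ≤ d) :
    ∑' m : ℕ, (m + d) * cubicGaussian a c (m + d) ≤ 4 * (d ^ 4 * exp (-(a * d ^ 2))) :=
  calc ∑' m : ℕ, (m + d) * cubicGaussian a c (m + d)
      ≤ ∑' m : ℕ, 2 * ((m + d) ^ 4 * exp (-(a * (m + d) ^ 2))) :=
        (summable_mul_cubicGaussian_nat_add ha hc hd).tsum_le_tsum
          (fun m => mul_cubicGaussian_le a hc (by linarith [m.cast_nonneg (α := ℝ)]))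
          ((summable_nat_add_pow_four_mul_exp ha hd).mul_left 2)
    _ ≤ 4 * (d ^ 4 * exp (-(a * d ^ 2))) := by
        rw [tsum_mul_left]; linarith [tsum_nat_add_pow_four_mul_exp_le ha hd]

end CubicGaussian

section NegQuarter

variable {a Y : ℝ}

theorem cubicGaussian_neg_quarter_nonpos (a : ℝ) (hY₀ : 0 ≤ Y) (hY : Y ≤ 1 / 2) :
    cubicGaussian a (-1 / 4) Y ≤ 0 :=
  mul_nonpos_of_nonpos_of_nonneg
    (by nlinarith [mul_nonneg hY₀ (by nlinarith : (0 : ℝ) ≤ 1 / 4 - Y ^ 2)]) (exp_pos _).le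

theorem cubicGaussian_neg_quarter_one_add_le (ha : 6 ≤ a) (hY₀ : 0 ≤ Y) (hY : Y ≤ 1 / 4) :
    cubicGaussian a (-1 / 4) (1 + Y) ≤ cubicGaussian a (-1 / 4) (1 - Y) := by
  have hq : 0 ≤ (1 - Y) ^ 3 + -1 / 4 * (1 - Y) := by
    nlinarith [mul_nonneg (sub_nonneg.2 hY) (by linarith : (0 : ℝ) ≤ 3 / 4 - Y)]
  have hpoly : (1 + Y) ^ 3 + -1 / 4 * (1 + Y)
      ≤ ((1 - Y) ^ 3 + -1 / 4 * (1 - Y)) * (1 + 24 * Y + (24 * Y) ^ 2 / 2) := by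
    nlinarith [mul_nonneg hY₀ (sub_nonneg.2 hY), mul_nonneg (mul_nonneg hY₀ hY₀) (sub_nonneg.2 hY),
      mul_nonneg (mul_nonneg hY₀ hY₀) hY₀,
      mul_nonneg (mul_nonneg (mul_nonneg hY₀ hY₀) hY₀) (sub_nonneg.2 hY)]
  have hexp : 1 + 24 * Y + (24 * Y) ^ 2 / 2 ≤ exp (4 * a * Y) :=
    (quadratic_le_exp_of_nonneg (by linarith)).trans (exp_le_exp.2 (by nlinarith))
  refine mul_exp_le_mul_exp (hpoly.trans ?_)
  rw [show -(a * (1 - Y) ^ 2) - -(a * (1 + Y) ^ 2) = 4 * a * Y by ring]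
  gcongr

theorem le_cubicGaussian_neg_quarter_one_sub_sub (ha : 0 ≤ a) (hY₀ : 1 / 4 ≤ Y)
    (hY : Y ≤ 1 / 2) :
    3 / 16 * (1 / 2 - Y) * exp (-(a / 4))
      ≤ cubicGaussian a (-1 / 4) (1 - Y) - cubicGaussian a (-1 / 4) Y := by
  have h₁ : 0 ≤ cubicGaussian a (-1 / 4) (1 - Y) := mul_nonneg
    (by nlinarith [mul_nonneg (by linarith : (0 : ℝ) ≤ 1 - Y) (sub_nonneg.2 hY)]) (exp_pos _).le
  have h₂ : 3 / 16 * (1 / 2 - Y) * exp (-(a / 4)) ≤ -cubicGaussian a (-1 / 4) Y := by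
    rw [cubicGaussian, ← neg_mul]
    have hY' := mul_nonneg (sub_nonneg.2 hY₀) (sub_nonneg.2 hY)
    refine mul_le_mul (by nlinarith) (exp_le_exp.2 ?_) (exp_pos _).le (by nlinarith)
    nlinarith [mul_le_mul_of_nonneg_left (by nlinarith : Y ^ 2 ≤ 1 / 4) ha]
  linarith

theorem four_mul_tsum_mul_cubicGaussian_neg_quarter_le (ha : 2 * π ≤ a) :
    4 * a * ∑' m : ℕ, (m + 1) * cubicGaussian a (-1 / 4) (m + 1) ≤ 3 / 16 * exp (-(a / 4)) := by
  have hπ := pi_gt_d2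
  have hπ' := pi_lt_d2
  have ha₆ : 6 ≤ a := by linarith
  have hc : |(-1 / 4 : ℝ)| ≤ 1 / 4 := by norm_num [abs_div]
  have hsplit : ∑' m : ℕ, (m + 1) * cubicGaussian a (-1 / 4) (m + 1)
      = 3 / 4 * exp (-a) + ∑' m : ℕ, (m + 2) * cubicGaussian a (-1 / 4) (m + 2) := by
    rw [(summable_mul_cubicGaussian_nat_add ha₆ hc (by norm_num)).tsum_eq_zero_add]
    push_cast
    simp only [cubicGaussian]
    ring_nf
  have htail := tsum_mul_cubicGaussian_le ha₆ hc (d := 2) (by norm_num)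
  have h₁ : exp (-(a * 2 ^ 2)) ≤ exp (-a) / 6400 := by
    have : exp (-18 : ℝ) ≤ 6400⁻¹ :=
      exp_neg_le_inv_of_le_sum (by norm_num) (by norm_num) 7
        (by norm_num [Finset.sum_range_succ, Nat.factorial])
    calc exp (-(a * 2 ^ 2)) = exp (-a) * exp (-(3 * a)) := by rw [← exp_add]; ring_nf
      _ ≤ exp (-a) * exp (-18) := by gcongr; linarith
      _ ≤ exp (-a) * 6400⁻¹ := by gcongr
      _ = exp (-a) / 6400 := by ring
  have h₂ : a * exp (-(3 / 4 * a)) ≤ 63 / 10 * 107⁻¹ := by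
    have : exp (-(471 / 100 : ℝ)) ≤ 107⁻¹ :=
      exp_neg_le_inv_of_le_sum (by norm_num) (by norm_num) 12
        (by norm_num [Finset.sum_range_succ, Nat.factorial])
    calc a * exp (-(3 / 4 * a)) ≤ (2 * π) * exp (-(3 / 4 * (2 * π))) :=
          mul_exp_neg_mul_le (by positivity) (by nlinarith) ha
      _ ≤ 63 / 10 * exp (-(471 / 100)) := by gcongr <;> linarith
      _ ≤ 63 / 10 * 107⁻¹ := by gcongr
  have hsplit' : exp (-a) = exp (-(3 / 4 * a)) * exp (-(a / 4)) := by rw [← exp_add]; ring_nf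
  calc 4 * a * ∑' m : ℕ, (m + 1) * cubicGaussian a (-1 / 4) (m + 1)
      ≤ 4 * a * (3 / 4 * exp (-a) + 4 * (2 ^ 4 * (exp (-a) / 6400))) := by
        rw [hsplit]; gcongr; linarith
    _ = 304 / 100 * (a * exp (-(3 / 4 * a))) * exp (-(a / 4)) := by rw [hsplit']; ring
    _ ≤ 304 / 100 * (63 / 10 * 107⁻¹) * exp (-(a / 4)) := by gcongr
    _ ≤ 3 / 16 * exp (-(a / 4)) := by gcongr; norm_num

theorem tsum_cubicGaussian_neg_quarter_nonneg_of_le_quarter (ha : 6 ≤ a) (hY₀ : 0 ≤ Y)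
    (hY : Y ≤ 1 / 4) : 0 ≤ ∑' n : ℤ, cubicGaussian a (-1 / 4) (n - Y) := by
  have hc : |(-1 / 4 : ℝ)| ≤ 1 / 4 := by norm_num [abs_div]
  rw [tsum_int_sub_eq_neg_add_tsum (cubicGaussian_neg a _)
    (fun d hd => summable_cubicGaussian_nat_add ha hc hd) hY₀ (by linarith)]
  have hpairs : 0 ≤ ∑' m : ℕ,
      (cubicGaussian a (-1 / 4) (m + (1 - Y)) - cubicGaussian a (-1 / 4) (m + (1 + Y))) := by
    refine tsum_nonneg fun m => ?_
    rcases m with _ | m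
    · rw [Nat.cast_zero, zero_add, zero_add, sub_nonneg]
      exact cubicGaussian_neg_quarter_one_add_le ha hY₀ hY
    · have hm : (0 : ℝ) ≤ m := m.cast_nonneg
      refine sub_nonneg.2 (antitoneOn_cubicGaussian ha hc ?_ ?_ ?_) <;>
        simp only [mem_Ici, Nat.cast_add_one] <;> linarith
  linarith [cubicGaussian_neg_quarter_nonpos a hY₀ (by linarith)]

theorem tsum_cubicGaussian_neg_quarter_nonneg_of_quarter_le (ha : 2 * π ≤ a) (hY₀ : 1 / 4 ≤ Y)
    (hY : Y ≤ 1 / 2) : 0 ≤ ∑' n : ℤ, cubicGaussian a (-1 / 4) (n - Y) := by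
  have ha₆ : 6 ≤ a := by linarith [pi_gt_d2]
  have hc : |(-1 / 4 : ℝ)| ≤ 1 / 4 := by norm_num [abs_div]
  have hs := fun d (hd : 0 ≤ d) => summable_cubicGaussian_nat_add ha₆ hc hd
  set h := cubicGaussian a (-1 / 4)
  have hsub := (hs _ (by linarith : 0 ≤ 1 - Y)).sub (hs Y (by linarith))
  rw [tsum_int_sub_eq_tsum_sub (cubicGaussian_neg a _) hs (by linarith) (by linarith),
    hsub.tsum_eq_zero_add, Nat.cast_zero, zero_add, zero_add]
  have hpairs : -(2 * a * (1 - 2 * Y) * ∑' m : ℕ, (m + 1) * h (m + 1))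
      ≤ ∑' m : ℕ, (h ((m + 1 : ℕ) + (1 - Y)) - h ((m + 1 : ℕ) + Y)) := by
    rw [← tsum_mul_left, ← tsum_neg]
    refine Summable.tsum_le_tsum (fun m => ?_)
      ((summable_mul_cubicGaussian_nat_add ha₆ hc (d := 1) (by norm_num)).mul_left _).neg
      ((summable_nat_add_iff 1).2 hsub)
    have hm : (0 : ℝ) ≤ m := m.cast_nonneg
    push_cast
    have hmvt : h (m + 1 + Y) - h (m + 1 + (1 - Y))
        ≤ 2 * a * (m + 1 + (1 - Y) - (m + 1 + Y)) * ((m + 1 + Y) * h (m + 1 + Y)) :=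
      cubicGaussian_sub_le ha₆ hc (by linarith) (by linarith)
    have hmono : (m + 1 + Y) * h (m + 1 + Y) ≤ (m + 1) * h (m + 1) :=
      antitoneOn_mul_cubicGaussian ha₆ hc (mem_Ici.2 (by linarith))
        (mem_Ici.2 (by linarith)) (by linarith)
    nlinarith [mul_le_mul_of_nonneg_left hmono (by nlinarith : 0 ≤ 2 * a * (1 - 2 * Y))]
  have hnum : 4 * a * ∑' m : ℕ, (m + 1) * h (m + 1) ≤ 3 / 16 * exp (-(a / 4)) :=
    four_mul_tsum_mul_cubicGaussian_neg_quarter_le ha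
  have hfirst : 3 / 16 * (1 / 2 - Y) * exp (-(a / 4)) ≤ h (1 - Y) - h Y :=
    le_cubicGaussian_neg_quarter_one_sub_sub (by linarith) hY₀ hY
  nlinarith [mul_le_mul_of_nonneg_left hnum (by linarith : (0 : ℝ) ≤ 1 / 2 - Y)]

theorem tsum_cubicGaussian_neg_quarter_nonneg (ha : 2 * π ≤ a) (hY₀ : 0 ≤ Y) (hY : Y ≤ 1 / 2) :
    0 ≤ ∑' n : ℤ, cubicGaussian a (-1 / 4) (n - Y) := by
  rcases le_total Y (1 / 4) with hY₁ | hY₁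
  · exact tsum_cubicGaussian_neg_quarter_nonneg_of_le_quarter (by linarith [pi_gt_d2]) hY₀ hY₁
  · exact tsum_cubicGaussian_neg_quarter_nonneg_of_quarter_le ha hY₁ hY

end NegQuarter

section Quarter

variable {a Y : ℝ}

theorem cubicGaussian_quarter_one_sub_le (ha : 6 ≤ a) (hY₀ : 1 / 16 ≤ Y) (hY : Y ≤ 1 / 2) :
    cubicGaussian a (1 / 4) (1 - Y) ≤ cubicGaussian a (1 / 4) Y := by
  have ht₀ : 0 ≤ 1 - 2 * Y := by linarith
  have ht₁ : 0 ≤ Y - 1 / 16 := by linarith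
  have hpoly : (1 - Y) ^ 3 + 1 / 4 * (1 - Y) ≤ (Y ^ 3 + 1 / 4 * Y) *
      ∑ i ∈ Finset.range 5, (6 * (1 - 2 * Y)) ^ i / i.factorial := by
    simp only [Finset.sum_range_succ, Finset.sum_range_zero, Nat.factorial]
    push_cast
    nlinarith [mul_nonneg ht₀ ht₁, mul_nonneg (mul_nonneg ht₀ ht₀) ht₁,
      mul_nonneg (mul_nonneg ht₀ ht₀) ht₀, mul_nonneg (pow_nonneg ht₀ 3) ht₁,
      pow_nonneg ht₀ 4, pow_nonneg ht₀ 5, mul_nonneg (pow_nonneg ht₀ 4) ht₁,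
      mul_nonneg (pow_nonneg ht₀ 5) ht₁, mul_nonneg (pow_nonneg ht₀ 6) ht₁]
  have hexp := (sum_le_exp_of_nonneg (by linarith : 0 ≤ 6 * (1 - 2 * Y)) 5).trans
    (exp_le_exp.2 (mul_le_mul_of_nonneg_right ha ht₀))
  refine mul_exp_le_mul_exp (hpoly.trans ?_)
  rw [show -(a * Y ^ 2) - -(a * (1 - Y) ^ 2) = a * (1 - 2 * Y) by ring]
  gcongr

theorem le_cubicGaussian_quarter (ha : 0 ≤ a) (hY₀ : 0 ≤ Y) (hY : Y ≤ 1 / 16) :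
    Y / 4 * exp (-(a / 256)) ≤ cubicGaussian a (1 / 4) Y :=
  mul_le_mul (by nlinarith [pow_nonneg hY₀ 3])
    (exp_le_exp.2 (by nlinarith [mul_le_mul_of_nonneg_left (by nlinarith : Y ^ 2 ≤ 1 / 256) ha]))
    (exp_pos _).le (by positivity)

theorem sixteen_mul_tsum_mul_cubicGaussian_quarter_le (ha : 6 ≤ a) :
    16 * a * ∑' m : ℕ, (m + 15 / 16) * cubicGaussian a (1 / 4) (m + 15 / 16)
      ≤ exp (-(a / 256)) := by
  have hc : |(1 / 4 : ℝ)| ≤ 1 / 4 := by norm_num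
  have hsplit : ∑' m : ℕ, (m + 15 / 16) * cubicGaussian a (1 / 4) (m + 15 / 16)
      = (15 / 16) ^ 2 * ((15 / 16) ^ 2 + 1 / 4) * exp (-(a * (15 / 16) ^ 2))
        + ∑' m : ℕ, (m + 31 / 16) * cubicGaussian a (1 / 4) (m + 31 / 16) := by
    rw [(summable_mul_cubicGaussian_nat_add ha hc (by norm_num)).tsum_eq_zero_add]
    push_cast
    simp only [cubicGaussian]
    ring_nf
  have htail := tsum_mul_cubicGaussian_le ha hc (d := 31 / 16) (by norm_num)
  have h₁ : exp (-(a * (31 / 16) ^ 2)) ≤ exp (-(a * (15 / 16) ^ 2)) / 1000 := by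
    have : exp (-17 : ℝ) ≤ 1000⁻¹ :=
      exp_neg_le_inv_of_le_sum (by norm_num) (by norm_num) 6
        (by norm_num [Finset.sum_range_succ, Nat.factorial])
    calc exp (-(a * (31 / 16) ^ 2)) = exp (-(a * (15 / 16) ^ 2)) * exp (-(23 / 8 * a)) := by
          rw [← exp_add]; ring_nf
      _ ≤ exp (-(a * (15 / 16) ^ 2)) * exp (-17) := by gcongr; linarith
      _ ≤ exp (-(a * (15 / 16) ^ 2)) * 1000⁻¹ := by gcongr
      _ = exp (-(a * (15 / 16) ^ 2)) / 1000 := by ring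
  have h₂ : a * exp (-(7 / 8 * a)) ≤ 6 * 102⁻¹ := by
    have : exp (-(21 / 4 : ℝ)) ≤ 102⁻¹ :=
      exp_neg_le_inv_of_le_sum (by norm_num) (by norm_num) 8
        (by norm_num [Finset.sum_range_succ, Nat.factorial])
    calc a * exp (-(7 / 8 * a)) ≤ 6 * exp (-(7 / 8 * 6)) :=
          mul_exp_neg_mul_le (by norm_num) (by norm_num) ha
      _ ≤ 6 * 102⁻¹ := by norm_num; linarith
  have hsplit' : exp (-(a * (15 / 16) ^ 2)) = exp (-(7 / 8 * a)) * exp (-(a / 256)) := by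
    rw [← exp_add]; ring_nf
  calc 16 * a * ∑' m : ℕ, (m + 15 / 16) * cubicGaussian a (1 / 4) (m + 15 / 16)
      ≤ 16 * a * (1 * exp (-(a * (15 / 16) ^ 2))
          + 4 * ((31 / 16) ^ 4 * (exp (-(a * (15 / 16) ^ 2)) / 1000))) := by
        rw [hsplit]; gcongr
        · norm_num
        · linarith
    _ ≤ 17 * (a * exp (-(7 / 8 * a))) * exp (-(a / 256)) := by
        have : 0 ≤ a * exp (-(7 / 8 * a)) * exp (-(a / 256)) := by positivity
        rw [hsplit']; nlinarith
    _ ≤ 17 * (6 * 102⁻¹) * exp (-(a / 256)) := by gcongr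
    _ = exp (-(a / 256)) := by ring

theorem tsum_cubicGaussian_quarter_nonpos_of_sixteenth_le (ha : 6 ≤ a) (hY₀ : 1 / 16 ≤ Y)
    (hY : Y ≤ 1 / 2) : ∑' n : ℤ, cubicGaussian a (1 / 4) (n - Y) ≤ 0 := by
  have hc : |(1 / 4 : ℝ)| ≤ 1 / 4 := by norm_num
  rw [tsum_int_sub_eq_tsum_sub (cubicGaussian_neg a _)
    (fun d hd => summable_cubicGaussian_nat_add ha hc hd) (by linarith) (by linarith)]
  refine tsum_nonpos fun m => ?_
  rcases m with _ | m
  · rw [Nat.cast_zero, zero_add, zero_add, sub_nonpos]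
    exact cubicGaussian_quarter_one_sub_le ha hY₀ hY
  · have hm : (0 : ℝ) ≤ m := m.cast_nonneg
    refine sub_nonpos.2 (antitoneOn_cubicGaussian ha hc ?_ ?_ ?_) <;>
      simp only [mem_Ici, Nat.cast_add_one] <;> linarith

theorem tsum_cubicGaussian_quarter_nonpos_of_le_sixteenth (ha : 6 ≤ a) (hY₀ : 0 ≤ Y)
    (hY : Y ≤ 1 / 16) : ∑' n : ℤ, cubicGaussian a (1 / 4) (n - Y) ≤ 0 := by
  have hc : |(1 / 4 : ℝ)| ≤ 1 / 4 := by norm_num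
  have hs := fun d (hd : 0 ≤ d) => summable_cubicGaussian_nat_add ha hc hd
  set k := cubicGaussian a (1 / 4)
  rw [tsum_int_sub_eq_neg_add_tsum (cubicGaussian_neg a _) hs hY₀ (by linarith)]
  have hpairs : ∑' m : ℕ, (k (m + (1 - Y)) - k (m + (1 + Y)))
      ≤ 4 * a * Y * ∑' m : ℕ, (m + 15 / 16) * k (m + 15 / 16) := by
    rw [← tsum_mul_left]
    refine Summable.tsum_le_tsum (fun m => ?_) ((hs _ (by linarith)).sub (hs _ (by linarith)))
      ((summable_mul_cubicGaussian_nat_add ha hc (by norm_num)).mul_left _)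
    have hm : (0 : ℝ) ≤ m := m.cast_nonneg
    have hmvt : k (m + (1 - Y)) - k (m + (1 + Y))
        ≤ 2 * a * (m + (1 + Y) - (m + (1 - Y))) * ((m + (1 - Y)) * k (m + (1 - Y))) :=
      cubicGaussian_sub_le ha hc (by linarith) (by linarith)
    have hmono : (m + (1 - Y)) * k (m + (1 - Y)) ≤ (m + 15 / 16) * k (m + 15 / 16) :=
      antitoneOn_mul_cubicGaussian ha hc (mem_Ici.2 (by linarith))
        (mem_Ici.2 (by linarith)) (by linarith)
    nlinarith [mul_le_mul_of_nonneg_left hmono (by positivity : 0 ≤ 4 * a * Y)]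
  have hnum : 16 * a * ∑' m : ℕ, (m + 15 / 16) * k (m + 15 / 16) ≤ exp (-(a / 256)) :=
    sixteen_mul_tsum_mul_cubicGaussian_quarter_le ha
  have hfirst : Y / 4 * exp (-(a / 256)) ≤ k Y := le_cubicGaussian_quarter (by linarith) hY₀ hY
  nlinarith [mul_le_mul_of_nonneg_left hnum (by linarith : (0 : ℝ) ≤ Y / 4)]

theorem tsum_cubicGaussian_quarter_nonpos (ha : 6 ≤ a) (hY₀ : 0 ≤ Y) (hY : Y ≤ 1 / 2) :
    ∑' n : ℤ, cubicGaussian a (1 / 4) (n - Y) ≤ 0 := by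
  rcases le_total Y (1 / 16) with hY₁ | hY₁
  · exact tsum_cubicGaussian_quarter_nonpos_of_le_sixteenth ha hY₀ hY₁
  · exact tsum_cubicGaussian_quarter_nonpos_of_sixteenth_le ha hY₁ hY

end Quarter

section Main

variable {a : ℝ}

theorem abs_tsum_cube_le_of_mem (ha : 2 * π ≤ a) {Y : ℝ} (hY₀ : 0 ≤ Y) (hY : Y ≤ 1 / 2) :
    |∑' n : ℤ, ((n : ℝ) - Y) ^ 3 * exp (-(a * ((n : ℝ) - Y) ^ 2))|
      ≤ 1 / 4 * |∑' n : ℤ, ((n : ℝ) - Y) * exp (-(a * ((n : ℝ) - Y) ^ 2))| := by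
  have ha₆ : 6 ≤ a := by linarith [pi_gt_d2]
  have hsum : ∀ c : ℝ, |c| ≤ 1 / 4 → Summable fun n : ℤ => cubicGaussian a c (n - Y) :=
    fun c hc => summable_int_sub (cubicGaussian_neg a c)
      (fun d hd => summable_cubicGaussian_nat_add ha₆ hc hd) hY₀ (by linarith)
  have hh := hsum (-1 / 4) (by norm_num [abs_div])
  have hk := hsum (1 / 4) (by norm_num)
  have hH := tsum_cubicGaussian_neg_quarter_nonneg ha hY₀ hY
  have hK := tsum_cubicGaussian_quarter_nonpos ha₆ hY₀ hY
  have hcube : ∑' n : ℤ, ((n : ℝ) - Y) ^ 3 * exp (-(a * ((n : ℝ) - Y) ^ 2))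
      = (∑' n : ℤ, cubicGaussian a (-1 / 4) (n - Y)
        + ∑' n : ℤ, cubicGaussian a (1 / 4) (n - Y)) / 2 := by
    rw [← hh.tsum_add hk, ← tsum_div_const]
    exact tsum_congr fun n => by simp only [cubicGaussian]; ring
  have hlin : ∑' n : ℤ, ((n : ℝ) - Y) * exp (-(a * ((n : ℝ) - Y) ^ 2))
      = 2 * (∑' n : ℤ, cubicGaussian a (1 / 4) (n - Y)
        - ∑' n : ℤ, cubicGaussian a (-1 / 4) (n - Y)) := by
    rw [← hk.tsum_sub hh, ← tsum_mul_left]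
    exact tsum_congr fun n => by simp only [cubicGaussian]; ring
  rw [hcube, hlin, abs_le, abs_of_nonpos (by linarith)]
  constructor <;> linarith

theorem abs_tsum_cube_le (ha : 2 * π ≤ a) (Y : ℝ) :
    |∑' n : ℤ, ((n : ℝ) - Y) ^ 3 * exp (-(a * ((n : ℝ) - Y) ^ 2))|
      ≤ 1 / 4 * |∑' n : ℤ, ((n : ℝ) - Y) * exp (-(a * ((n : ℝ) - Y) ^ 2))| := by
  have hodd₃ : ∀ u : ℝ, (-u) ^ 3 * exp (-(a * (-u) ^ 2)) = -(u ^ 3 * exp (-(a * u ^ 2))) :=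
    fun u => by rw [neg_sq]; ring
  have hodd₁ : ∀ u : ℝ, -u * exp (-(a * (-u) ^ 2)) = -(u * exp (-(a * u ^ 2))) :=
    fun u => by rw [neg_sq]; ring
  have h₃ := tsum_int_sub_sub_intCast (fun u => u ^ 3 * exp (-(a * u ^ 2))) Y ⌊Y⌋
  have h₁ := tsum_int_sub_sub_intCast (fun u => u * exp (-(a * u ^ 2))) Y ⌊Y⌋
  beta_reduce at h₃ h₁
  rw [← h₃, ← h₁, Int.self_sub_floor]
  rcases le_or_gt (Int.fract Y) (1 / 2) with hZ | hZ
  · exact abs_tsum_cube_le_of_mem ha (Int.fract_nonneg Y) hZ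
  · have r₃ := tsum_int_sub_one_sub (g := fun u => u ^ 3 * exp (-(a * u ^ 2))) hodd₃
      (1 - Int.fract Y)
    have r₁ := tsum_int_sub_one_sub (g := fun u => u * exp (-(a * u ^ 2))) hodd₁
      (1 - Int.fract Y)
    beta_reduce at r₃ r₁
    rw [sub_sub_cancel] at r₃ r₁
    rw [r₃, r₁, abs_neg, abs_neg]
    exact abs_tsum_cube_le_of_mem ha (by linarith [Int.fract_lt_one Y]) (by linarith)

end Main

theorem cubic_quotient_bound_general (X Y : ℝ) (hX0 : 0 < X) (hX : X ≤ 1/2) :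
    |∑' n : ℤ, ((n : ℝ) - Y)^3 * Real.exp (-π * ((n : ℝ) - Y)^2 / X)|
      ≤ (1/4) * |∑' n : ℤ, ((n : ℝ) - Y) * Real.exp (-π * ((n : ℝ) - Y)^2 / X)| := by
  have ha : 2 * π ≤ π / X := by
    rw [le_div_iff₀ hX0]; nlinarith [pi_pos]
  have hexp : ∀ u : ℝ, -π * u ^ 2 / X = -(π / X * u ^ 2) := fun u => by ring
  simp only [hexp]
  exact abs_tsum_cube_le ha Y

theorem cubic_quotient_bound (X Y : ℝ) (hX0 : 0 < X) (hX : X ≤ 1/2)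
    (hden : (∑' n : ℤ, ((n : ℝ) - Y) * Real.exp (-π * ((n : ℝ) - Y)^2 / X)) ≠ 0) :
    |∑' n : ℤ, ((n : ℝ) - Y)^3 * Real.exp (-π * ((n : ℝ) - Y)^2 / X)|
      ≤ (1/4) * |∑' n : ℤ, ((n : ℝ) - Y) * Real.exp (-π * ((n : ℝ) - Y)^2 / X)| :=
  cubic_quotient_bound_general X Y hX0 hX
end

section
/- Let a ≥ 2. Define σ₁ = Σ_{n≥2} [2aπ(n−1/2)⁶ − 5(n−1/2)⁴]/(aπ/32 − 5/16) · e^{−aπ(n²−n)} and σ₂ = Σ_{n≥2} [2aπ(n−1/2)² − 1]/(aπ/2 − 1) · e^{−aπ(n²−n)}. Then |(aπ−10)/(aπ−2)| · |(1+σ₁)/(1+σ₂)| ≤ 1. -/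
/-!
Put `x = aπ ≥ 6`. Then `σ₁ = 32 S / (x - 10)` with `S = ∑_{n ≥ 2} (2x m⁶ - 5m⁴) e^{-x(n²-n)}`,
`m = n - 1/2`, and `0 ≤ S ≤ 1/4`: by `x e^{-x} ≤ 1` and `(3/2 + t)⁶ ≤ (3/2)⁶ e^{4t}`, the term of
index `n + 2` is at most `(729/32) e^{-6} 2^{-n}`. Hence, as `σ₂ ≥ 0`,
`|x - 10| |1 + σ₁| = |x - 10 + 32 S| ≤ x - 2 ≤ (x - 2)(1 + σ₂)`.
-/

open Real

/-- The summands of `σ₁` and `σ₂` without their constant denominators, for `x = aπ` and the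
paper's index shifted to `n + 2`. -/
noncomputable def sigmaOneTerm (x : ℝ) (n : ℕ) : ℝ :=
  (2 * x * (n + 3 / 2) ^ 6 - 5 * (n + 3 / 2) ^ 4) * exp (-(x * ((n + 1) * (n + 2))))

noncomputable def sigmaTwoTerm (x : ℝ) (n : ℕ) : ℝ :=
  (2 * x * (n + 3 / 2) ^ 2 - 1) * exp (-(x * ((n + 1) * (n + 2))))

theorem mul_exp_neg_mul_le_s13 {x x₀ c : ℝ} (hx : x₀ ≤ x) (hc : 1 ≤ c) :
    x * exp (-(x * c)) ≤ exp (-(x₀ * (c - 1))) := by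
  have hself : x * exp (-x) ≤ 1 := by
    rw [exp_neg, ← div_eq_mul_inv, div_le_one (exp_pos x)]
    linarith [add_one_le_exp x]
  calc x * exp (-(x * c)) = x * exp (-x) * exp (-(x * (c - 1))) := by
        rw [mul_assoc, ← exp_add]; ring_nf
    _ ≤ 1 * exp (-(x₀ * (c - 1))) :=
        mul_le_mul hself (exp_le_exp.2 (by nlinarith)) (exp_pos _).le zero_le_one
    _ = exp (-(x₀ * (c - 1))) := one_mul _

theorem add_pow_le_pow_mul_exp {c t : ℝ} (hc : 0 < c) (ht : 0 ≤ c + t) (k : ℕ) :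
    (c + t) ^ k ≤ c ^ k * exp (k * t / c) := by
  have h : c + t ≤ c * exp (t / c) :=
    calc c + t = c * (t / c + 1) := by field_simp; ring
      _ ≤ c * exp (t / c) := mul_le_mul_of_nonneg_left (add_one_le_exp _) hc.le
  calc (c + t) ^ k ≤ (c * exp (t / c)) ^ k := pow_le_pow_left₀ ht h k
    _ = c ^ k * exp (k * t / c) := by rw [mul_pow, ← exp_nat_mul, mul_div_assoc]

theorem sigmaOneTerm_nonneg {x : ℝ} (hx : 10 / 9 ≤ x) (n : ℕ) : 0 ≤ sigmaOneTerm x n := by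
  have hm : 9 / 4 ≤ ((n : ℝ) + 3 / 2) ^ 2 := by nlinarith [n.cast_nonneg (α := ℝ)]
  have hfactor : 2 * x * (n + 3 / 2) ^ 6 - 5 * (n + 3 / 2) ^ 4
      = ((n : ℝ) + 3 / 2) ^ 4 * (2 * x * (n + 3 / 2) ^ 2 - 5) := by ring
  rw [sigmaOneTerm, hfactor]
  have : 0 ≤ 2 * x * ((n : ℝ) + 3 / 2) ^ 2 - 5 := by nlinarith
  positivity

theorem sigmaTwoTerm_nonneg {x : ℝ} (hx : 2 / 9 ≤ x) (n : ℕ) : 0 ≤ sigmaTwoTerm x n := by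
  have hm : 9 / 4 ≤ ((n : ℝ) + 3 / 2) ^ 2 := by nlinarith [n.cast_nonneg (α := ℝ)]
  have : 0 ≤ 2 * x * ((n : ℝ) + 3 / 2) ^ 2 - 1 := by nlinarith
  rw [sigmaTwoTerm]
  positivity

theorem sigmaOneTerm_le {x : ℝ} (hx : 6 ≤ x) (n : ℕ) :
    sigmaOneTerm x n ≤ 729 / 32 * exp (-6) * (1 / 2) ^ n := by
  have hn : (0 : ℝ) ≤ n := n.cast_nonneg
  have hc : 1 ≤ ((n : ℝ) + 1) * (n + 2) := by nlinarith
  have hpow : ((3 : ℝ) / 2 + n) ^ 6 ≤ (3 / 2) ^ 6 * exp (4 * n) := by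
    convert add_pow_le_pow_mul_exp (c := 3 / 2) (t := n) (by norm_num) (by positivity) 6 using 3
    ring
  have hgeom : exp (-(6 * n ^ 2 + 14 * n)) ≤ (1 / 2) ^ n :=
    calc exp (-(6 * n ^ 2 + 14 * n)) ≤ exp (n * -1) := exp_le_exp.2 (by nlinarith)
      _ = exp (-1) ^ n := exp_nat_mul _ n
      _ ≤ (1 / 2) ^ n := pow_le_pow_left₀ (exp_pos _).le exp_neg_one_lt_half.le n
  calc sigmaOneTerm x n
      ≤ 2 * ((3 / 2 : ℝ) + n) ^ 6 * (x * exp (-(x * ((n + 1) * (n + 2))))) := by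
        rw [sigmaOneTerm]
        nlinarith [exp_pos (-(x * ((n + 1) * (n + 2)))),
          pow_nonneg (by positivity : (0 : ℝ) ≤ n + 3 / 2) 4]
    _ ≤ 2 * ((3 / 2) ^ 6 * exp (4 * n)) * exp (-(6 * (((n + 1) * (n + 2)) - 1))) := by
        gcongr
        exact mul_exp_neg_mul_le_s13 hx hc
    _ = 729 / 32 * (exp (-6) * exp (-(6 * n ^ 2 + 14 * n))) := by
        rw [← exp_add, mul_assoc, mul_assoc, ← exp_add]; ring_nf
    _ ≤ 729 / 32 * exp (-6) * (1 / 2) ^ n := by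
        rw [← mul_assoc]; gcongr

theorem summable_sigmaOneTerm {x : ℝ} (hx : 6 ≤ x) : Summable (sigmaOneTerm x) :=
  Summable.of_nonneg_of_le (sigmaOneTerm_nonneg (by linarith)) (sigmaOneTerm_le hx)
    (summable_geometric_two.mul_left _)

theorem tsum_sigmaOneTerm_le {x : ℝ} (hx : 6 ≤ x) : ∑' n, sigmaOneTerm x n ≤ 1 / 4 := by
  have hexp : 729 / 4 ≤ exp 6 :=
    calc (729 / 4 : ℝ) ≤ 2.7 ^ 6 := by norm_num
      _ ≤ exp 1 ^ 6 := pow_le_pow_left₀ (by norm_num) (by linarith [exp_one_gt_d9]) 6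
      _ = exp 6 := by rw [← exp_nat_mul]; norm_num
  have hexp' : exp (-6) * exp 6 = 1 := by rw [← exp_add]; norm_num
  calc ∑' n, sigmaOneTerm x n ≤ ∑' n : ℕ, 729 / 32 * exp (-6) * (1 / 2 : ℝ) ^ n :=
        (summable_sigmaOneTerm hx).tsum_le_tsum (sigmaOneTerm_le hx)
          (summable_geometric_two.mul_left _)
    _ = 729 / 16 * exp (-6) := by rw [tsum_mul_left, tsum_geometric_two]; ring
    _ ≤ 1 / 4 := by nlinarith [exp_pos (-6)]

theorem abs_div_mul_abs_div_le_one {x S σ₁ σ₂ : ℝ} (hx : 6 ≤ x) (hS₀ : 0 ≤ S) (hS : S ≤ 1 / 4)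
    (hσ₁ : σ₁ = S / (x / 32 - 5 / 16)) (hσ₂ : 0 ≤ σ₂) :
    |(x - 10) / (x - 2)| * |(1 + σ₁) / (1 + σ₂)| ≤ 1 := by
  -- at `x = 10` the junk value `σ₁ = S / 0` is harmless: the factor `x - 10` vanishes
  rcases eq_or_ne x 10 with rfl | hx10
  · norm_num
  have hcancel : (x - 10) * (1 + σ₁) = x - 10 + 32 * S := by
    rw [hσ₁, show x / 32 - 5 / 16 = (x - 10) / 32 by ring]
    field_simp [sub_ne_zero.2 hx10]
  rw [abs_div, abs_div, div_mul_div_comm, ← abs_mul, ← abs_mul, hcancel,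
    div_le_one (abs_pos.2 (mul_ne_zero (by linarith) (by linarith)))]
  calc |x - 10 + 32 * S| ≤ x - 2 := abs_le.2 ⟨by linarith, by linarith⟩
    _ ≤ (x - 2) * (1 + σ₂) := by nlinarith
    _ ≤ |(x - 2) * (1 + σ₂)| := le_abs_self _

theorem sigma_quotient_bound (a : ℝ) (ha : 2 ≤ a) :
    let σ₁ : ℝ := ∑' n : ℕ, (2 * a * π * (((n : ℝ) + 2) - 1/2)^6 - 5 * (((n : ℝ) + 2) - 1/2)^4) /
        (a * π / 32 - 5/16) * Real.exp (-a * π * (((n : ℝ) + 2)^2 - ((n : ℝ) + 2)))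
    let σ₂ : ℝ := ∑' n : ℕ, (2 * a * π * (((n : ℝ) + 2) - 1/2)^2 - 1) / (a * π / 2 - 1) *
        Real.exp (-a * π * (((n : ℝ) + 2)^2 - ((n : ℝ) + 2)))
    |(a * π - 10) / (a * π - 2)| * |(1 + σ₁) / (1 + σ₂)| ≤ 1 := by
  intro σ₁ σ₂
  have hx : 6 ≤ a * π := by nlinarith [pi_gt_three]
  have hσ₁ : σ₁ = (∑' n, sigmaOneTerm (a * π) n) / (a * π / 32 - 5 / 16) := by
    rw [← tsum_div_const]
    exact tsum_congr fun n => by rw [sigmaOneTerm]; ring_nf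
  have hσ₂ : σ₂ = (∑' n, sigmaTwoTerm (a * π) n) / (a * π / 2 - 1) := by
    rw [← tsum_div_const]
    exact tsum_congr fun n => by rw [sigmaTwoTerm]; ring_nf
  refine abs_div_mul_abs_div_le_one hx (tsum_nonneg (sigmaOneTerm_nonneg (by linarith)))
    (tsum_sigmaOneTerm_le hx) hσ₁ ?_
  rw [hσ₂]
  exact div_nonneg (tsum_nonneg (sigmaTwoTerm_nonneg (by linarith))) (by linarith)
end

section
/- For X ≥ 1/5, Y ∈ ℝ with sin(2πY) ≠ 0, and any positive integer k, |Σ_{n≥1} n e^{−π(n²−1)X} sin(2nkπY)| ≤ k · (1 + μ(X))/(1 − μ(X)) · |Σ_{n≥1} n e^{−π(n²−1)X} sin(2nπY)|, where μ(X) = Σ_{n≥2} n² e^{−π(n²−1)X}; in particular 1 − μ(X) > 0 for X ≥ 1/5. -/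
open Real

/-!
Since `|sin (m θ)| ≤ m |sin θ|`, the series with frequencies `(n + 1) k` is bounded termwise by
`k (1 + μ) |sin 2πY|`, while the series with frequencies `n + 1` is `sin 2πY` plus a tail of size
at most `μ |sin 2πY|`, hence is at least `(1 - μ) |sin 2πY|` in absolute value.
For `X ≥ 1/5` we have `μ < 1`: as `(n + 2)² - 1 ≥ 3 + 5n`, the terms of `μ` are at most
`4 · 3ⁿ · e^{-3π/5} · e^{-πn} ≤ (5/6) (3/20)ⁿ`.
-/

theorem abs_sin_nat_mul_le (n : ℕ) (θ : ℝ) : |sin (n * θ)| ≤ n * |sin θ| := by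
  induction n with
  | zero => simp
  | succ n ih =>
    rw [Nat.cast_succ, add_mul, one_mul, sin_add]
    calc |sin (n * θ) * cos θ + cos (n * θ) * sin θ|
        ≤ |sin (n * θ)| * |cos θ| + |cos (n * θ)| * |sin θ| := by
          simpa only [abs_mul] using abs_add_le (sin (n * θ) * cos θ) (cos (n * θ) * sin θ)
      _ ≤ |sin (n * θ)| * 1 + 1 * |sin θ| := by
          gcongr <;> exact abs_cos_le_one _
      _ ≤ (n + 1) * |sin θ| := by linarith

theorem abs_tsum_mul_sin_le {c : ℕ → ℝ} {m : ℕ → ℕ} {a : ℝ}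
    (h : HasSum (fun n => (m n : ℝ) * |c n|) a) (θ : ℝ) :
    |∑' n, c n * sin (m n * θ)| ≤ a * |sin θ| :=
  tsum_of_norm_bounded (h.mul_right |sin θ|) fun n => by
    rw [Real.norm_eq_abs, abs_mul, mul_comm (m n : ℝ), mul_assoc]
    exact mul_le_mul_of_nonneg_left (abs_sin_nat_mul_le _ _) (abs_nonneg _)

theorem sub_mul_abs_sin_le_abs_tsum_mul_sin {c : ℕ → ℝ} {a : ℝ}
    (h : HasSum (fun n : ℕ => ((n : ℝ) + 2) * |c (n + 1)|) a) (θ : ℝ) :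
    (|c 0| - a) * |sin θ| ≤ |∑' n : ℕ, c n * sin (((n : ℝ) + 1) * θ)| := by
  have hc : Summable c := (summable_nat_add_iff 1).1 <| Summable.of_abs <|
    h.summable.of_nonneg_of_le (fun n => abs_nonneg _) fun n =>
      le_mul_of_one_le_left (abs_nonneg _) (by linarith [n.cast_nonneg (α := ℝ)])
  have hs : Summable fun n : ℕ => c n * sin (((n : ℝ) + 1) * θ) :=
    hc.abs.of_norm_bounded fun n => by
      rw [Real.norm_eq_abs, abs_mul]
      exact mul_le_of_le_one_right (abs_nonneg _) (abs_sin_le_one _)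
  have htail :
      |∑' n : ℕ, c (n + 1) * sin ((((n + 1 : ℕ) : ℝ) + 1) * θ)| ≤ a * |sin θ| := by
    have := abs_tsum_mul_sin_le (c := fun n => c (n + 1)) (m := fun n => n + 2)
      (by push_cast; exact h) θ
    push_cast at this ⊢
    convert this using 6
    ring
  rw [hs.tsum_eq_zero_add, Nat.cast_zero, zero_add, one_mul]
  have := abs_sub_abs_le_abs_add (c 0 * sin θ)
    (∑' n : ℕ, c (n + 1) * sin ((((n + 1 : ℕ) : ℝ) + 1) * θ))
  rw [abs_mul] at this
  linarith

theorem summable_sq_mul_exp {X : ℝ} (hX : 0 < X) :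
    Summable fun n : ℕ => (n : ℝ) ^ 2 * exp (-π * ((n : ℝ) ^ 2 - 1) * X) := by
  refine ((summable_pow_mul_exp_neg_nat_mul 2 (mul_pos pi_pos hX)).mul_left
    (exp (π * X))).of_nonneg_of_le (fun n => by positivity) fun n => ?_
  have hn : (n : ℝ) ≤ n ^ 2 := by exact_mod_cast Nat.le_self_pow two_ne_zero n
  rw [mul_left_comm, ← exp_add]
  gcongr
  nlinarith [mul_pos pi_pos hX]

theorem summable_add_two_sq_mul_exp {X : ℝ} (hX : 0 < X) :
    Summable fun n : ℕ => ((n : ℝ) + 2) ^ 2 * exp (-π * (((n : ℝ) + 2) ^ 2 - 1) * X) := by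
  simpa using (summable_nat_add_iff 2).2 (summable_sq_mul_exp hX)

theorem hasSum_add_one_sq_mul_exp {X : ℝ} (hX : 0 < X) :
    HasSum (fun n : ℕ => ((n : ℝ) + 1) ^ 2 * exp (-π * (((n : ℝ) + 1) ^ 2 - 1) * X))
      (1 + ∑' n : ℕ, ((n : ℝ) + 2) ^ 2 * exp (-π * (((n : ℝ) + 2) ^ 2 - 1) * X)) := by
  rw [← hasSum_nat_add_iff' 1]
  simpa [add_assoc, one_add_one_eq_two] using (summable_add_two_sq_mul_exp hX).hasSum

theorem exp_neg_pi_le : exp (-π) ≤ 1 / 20 := by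
  have h20 : (20 : ℝ) ≤ exp 3 :=
    calc (20 : ℝ) ≤ 2.7182818283 ^ 3 := by norm_num
      _ ≤ exp 1 ^ 3 := by gcongr; exact exp_one_gt_d9.le
      _ = exp 3 := by rw [← exp_nat_mul]; norm_num
  rw [exp_neg, one_div]
  exact inv_anti₀ (by norm_num) (h20.trans (exp_le_exp.2 pi_gt_three.le))

theorem exp_neg_three_mul_pi_div_five_le : exp (-(3 * π / 5)) ≤ 5 / 24 := by
  have h : (24 / 5 : ℝ) ≤ exp (9 / 5) :=
    calc (24 / 5 : ℝ) ≤ 2.7182818283 * (4 / 5 + 1) := by norm_num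
      _ ≤ exp 1 * exp (4 / 5) := by gcongr; exacts [exp_one_gt_d9.le, add_one_le_exp _]
      _ = exp (9 / 5) := by rw [← exp_add]; norm_num
  rw [exp_neg, show (5 / 24 : ℝ) = (24 / 5)⁻¹ by norm_num]
  have h9 : (9 / 5 : ℝ) ≤ 3 * π / 5 := by linarith [pi_gt_three]
  exact inv_anti₀ (by norm_num) (h.trans (exp_le_exp.2 h9))

theorem add_two_sq_le_four_mul_three_pow (n : ℕ) : (n + 2) ^ 2 ≤ 4 * 3 ^ n := by
  induction n with
  | zero => norm_num
  | succ n ih =>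
    calc (n + 1 + 2) ^ 2 ≤ 3 * (n + 2) ^ 2 := by ring_nf; omega
      _ ≤ 3 * (4 * 3 ^ n) := by omega
      _ = 4 * 3 ^ (n + 1) := by ring

theorem add_two_sq_mul_exp_le {X : ℝ} (hX : 1 / 5 ≤ X) (n : ℕ) :
    ((n : ℝ) + 2) ^ 2 * exp (-π * (((n : ℝ) + 2) ^ 2 - 1) * X) ≤ 5 / 6 * (3 / 20) ^ n := by
  have hsq : ((n : ℝ) + 2) ^ 2 ≤ 4 * 3 ^ n := by
    exact_mod_cast add_two_sq_le_four_mul_three_pow n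
  have hexp :
      exp (-π * (((n : ℝ) + 2) ^ 2 - 1) * X) ≤ exp (-(3 * π / 5)) * exp (-π) ^ n := by
    have hn : (n : ℝ) ≤ n ^ 2 := by exact_mod_cast Nat.le_self_pow two_ne_zero n
    have hpos : 0 ≤ ((n : ℝ) + 2) ^ 2 - 1 := by nlinarith
    rw [← exp_nat_mul, ← exp_add]
    gcongr
    nlinarith [mul_nonneg (mul_nonneg pi_pos.le hpos) (sub_nonneg.2 hX),
      mul_nonneg pi_pos.le (sub_nonneg.2 hn)]
  calc _ ≤ (4 * 3 ^ n) * (exp (-(3 * π / 5)) * exp (-π) ^ n) := by gcongr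
    _ ≤ (4 * 3 ^ n) * (5 / 24 * (1 / 20) ^ n) := by
        gcongr
        exacts [exp_neg_three_mul_pi_div_five_le, exp_neg_pi_le]
    _ = 5 / 6 * (3 / 20) ^ n := by simp only [div_pow, one_pow]; ring

theorem tsum_add_two_sq_mul_exp_lt_one {X : ℝ} (hX : 1 / 5 ≤ X) :
    ∑' n : ℕ, ((n : ℝ) + 2) ^ 2 * exp (-π * (((n : ℝ) + 2) ^ 2 - 1) * X) < 1 := by
  have hgeom :=
    (hasSum_geometric_of_lt_one (r := (3 / 20 : ℝ)) (by norm_num) (by norm_num)).mul_left (5 / 6)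
  calc _ ≤ ‖∑' n : ℕ, ((n : ℝ) + 2) ^ 2 * exp (-π * (((n : ℝ) + 2) ^ 2 - 1) * X)‖ :=
        le_norm_self _
    _ ≤ 5 / 6 * (1 - 3 / 20)⁻¹ := tsum_of_norm_bounded hgeom fun n => by
        rw [norm_of_nonneg (by positivity)]
        exact add_two_sq_mul_exp_le hX n
    _ < 1 := by norm_num

theorem thetaY_quotient_bound_general (X Y : ℝ) (hX : 1/5 ≤ X)
    (k : ℕ) :
    (1 - ∑' n : ℕ, ((n : ℝ) + 2)^2 * Real.exp (-π * (((n : ℝ) + 2)^2 - 1) * X)) > 0 ∧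
    |∑' n : ℕ, ((n : ℝ) + 1) * Real.exp (-π * (((n : ℝ) + 1)^2 - 1) * X) *
        Real.sin (2 * ((n : ℝ) + 1) * (k : ℝ) * π * Y)|
      ≤ (k : ℝ) *
        ((1 + ∑' n : ℕ, ((n : ℝ) + 2)^2 * Real.exp (-π * (((n : ℝ) + 2)^2 - 1) * X)) /
         (1 - ∑' n : ℕ, ((n : ℝ) + 2)^2 * Real.exp (-π * (((n : ℝ) + 2)^2 - 1) * X))) *
        |∑' n : ℕ, ((n : ℝ) + 1) * Real.exp (-π * (((n : ℝ) + 1)^2 - 1) * X) *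
            Real.sin (2 * ((n : ℝ) + 1) * π * Y)| := by
  have hX0 : 0 < X := by linarith
  set μ := ∑' n : ℕ, ((n : ℝ) + 2) ^ 2 * exp (-π * (((n : ℝ) + 2) ^ 2 - 1) * X)
  set c : ℕ → ℝ := fun n => ((n : ℝ) + 1) * exp (-π * (((n : ℝ) + 1) ^ 2 - 1) * X)
    with hc
  have hμ : μ < 1 := tsum_add_two_sq_mul_exp_lt_one hX
  have hsum_freq : HasSum (fun n => ((n + 1) * k : ℕ) * |c n|) (k * (1 + μ)) := by
    refine ((hasSum_add_one_sq_mul_exp hX0).mul_left (k : ℝ)).congr_fun fun n => ?_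
    rw [hc, abs_of_nonneg (by positivity)]
    push_cast
    ring
  have hsum_tail : HasSum (fun n : ℕ => ((n : ℝ) + 2) * |c (n + 1)|) μ := by
    refine (summable_add_two_sq_mul_exp hX0).hasSum.congr_fun fun n => ?_
    simp only [hc, Nat.cast_succ, add_assoc, one_add_one_eq_two]
    rw [abs_of_nonneg (by positivity)]
    ring
  have hlow :
      (1 - μ) * |sin (2 * π * Y)| ≤ |∑' n : ℕ, c n * sin (2 * ((n : ℝ) + 1) * π * Y)| :=
    calc _ = (|c 0| - μ) * |sin (2 * π * Y)| := by simp [hc]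
      _ ≤ |∑' n : ℕ, c n * sin (((n : ℝ) + 1) * (2 * π * Y))| :=
          sub_mul_abs_sin_le_abs_tsum_mul_sin hsum_tail _
      _ = _ := by congr 1; exact tsum_congr fun n => by congr 2; ring
  refine ⟨sub_pos.2 hμ, ?_⟩
  calc _ = |∑' n : ℕ, c n * sin (((n + 1) * k : ℕ) * (2 * π * Y))| := by
        congr 1; exact tsum_congr fun n => by congr 2; push_cast; ring
    _ ≤ k * (1 + μ) * |sin (2 * π * Y)| := abs_tsum_mul_sin_le hsum_freq _
    _ = k * ((1 + μ) / (1 - μ)) * ((1 - μ) * |sin (2 * π * Y)|) := by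
        field_simp [(sub_pos.2 hμ).ne']
    _ ≤ _ := by gcongr

theorem thetaY_quotient_bound (X Y : ℝ) (hX : 1/5 ≤ X) (hY : Real.sin (2 * π * Y) ≠ 0)
    (k : ℕ) (hk : 1 ≤ k) :
    (1 - ∑' n : ℕ, ((n : ℝ) + 2)^2 * Real.exp (-π * (((n : ℝ) + 2)^2 - 1) * X)) > 0 ∧
    |∑' n : ℕ, ((n : ℝ) + 1) * Real.exp (-π * (((n : ℝ) + 1)^2 - 1) * X) *
        Real.sin (2 * ((n : ℝ) + 1) * (k : ℝ) * π * Y)|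
      ≤ (k : ℝ) *
        ((1 + ∑' n : ℕ, ((n : ℝ) + 2)^2 * Real.exp (-π * (((n : ℝ) + 2)^2 - 1) * X)) /
         (1 - ∑' n : ℕ, ((n : ℝ) + 2)^2 * Real.exp (-π * (((n : ℝ) + 2)^2 - 1) * X))) *
        |∑' n : ℕ, ((n : ℝ) + 1) * Real.exp (-π * (((n : ℝ) + 1)^2 - 1) * X) *
            Real.sin (2 * ((n : ℝ) + 1) * π * Y)| :=
  thetaY_quotient_bound_general X Y hX k
end
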